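/- arXiv:1402.3757 — 10 statements merged into one kernel-verified Lean document; each statement's English description precedes it below -/
import Mathlib

section
/- The expected Hamming distance under the exponential distribution equals h(ε) = n/(1 + e^{ε}/(m-1)): for any y in D^n and ε ≥ 0, the sum over x in D^n of d(x,y)·e^{-ε·d(x,y)}/(1+(m-1)e^{-ε})^n equals n(m-1)e^{-ε}/(1+(m-1)e^{-ε}). -/
lemma hd_cons {n m : ℕ} (a b : Fin m) (x y : Fin n → Fin m) :
    hammingDist (Fin.cons a x : Fin (n+1) → Fin m) (Fin.cons b y) =
      (if a = b then 0 else 1) + hammingDist x y := by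
  simp only [hammingDist, Finset.card_filter, Fin.sum_univ_succ, Fin.cons_zero, Fin.cons_succ]
  by_cases h : a = b <;> simp [h]

lemma sum_eq_card {m : ℕ} (hm : 1 ≤ m) (b : Fin m) (u v : ℝ) :
    ∑ a : Fin m, (if a = b then u else v) = u + ((m : ℝ) - 1) * v := by
  rw [Finset.sum_ite, Finset.sum_const, Finset.sum_const, Finset.filter_eq',
    Finset.filter_ne', Finset.card_erase_of_mem (Finset.mem_univ b)]
  have : (1:ℝ) ≤ (m:ℝ) := by exact_mod_cast hm
  simp only [Finset.mem_univ, if_true, Finset.card_singleton, Finset.card_univ,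
    Fintype.card_fin, one_smul, nsmul_eq_mul, Nat.cast_sub hm]
  push_cast
  ring

lemma sum_pow (n m : ℕ) (hm : 1 ≤ m) (t : ℝ) (y : Fin n → Fin m) :
    ∑ x : Fin n → Fin m, t ^ (hammingDist x y) = (1 + ((m : ℝ) - 1) * t) ^ n := by
  induction n with
  | zero => simp [hammingDist]
  | succ n ih =>
    rw [← (Fin.consEquiv (fun _ : Fin (n+1) => Fin m)).sum_comp, Fintype.sum_prod_type,
      ← Fin.cons_self_tail y]
    simp only [Fin.consEquiv, Equiv.coe_fn_mk, hd_cons, pow_add]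
    rw [← Finset.sum_mul_sum, pow_succ]
    have h1 : (∑ i : Fin m, t ^ if i = y 0 then 0 else 1) = 1 + ((m:ℝ)-1)*t := by
      rw [← sum_eq_card hm (y 0) 1 t]
      exact Finset.sum_congr rfl fun a _ => by by_cases h : a = y 0 <;> simp [h]
    rw [h1, ih]; ring

lemma sum_mul_pow (n m : ℕ) (hm : 1 ≤ m) (t : ℝ) (y : Fin n → Fin m) :
    ∑ x : Fin n → Fin m, (hammingDist x y : ℝ) * t ^ (hammingDist x y)
      = n * ((m : ℝ) - 1) * t * (1 + ((m : ℝ) - 1) * t) ^ (n - 1) := by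
  induction n with
  | zero => simp [hammingDist]
  | succ n ih =>
    rw [← (Fin.consEquiv (fun _ : Fin (n+1) => Fin m)).sum_comp, Fintype.sum_prod_type,
      ← Fin.cons_self_tail y]
    simp only [Fin.consEquiv, Equiv.coe_fn_mk, hd_cons]
    have expand : ∀ (a : Fin m) (x : Fin n → Fin m),
        ((((if a = y 0 then 0 else 1) + hammingDist x (Fin.tail y) : ℕ)) : ℝ)
          * t ^ ((if a = y 0 then 0 else 1) + hammingDist x (Fin.tail y))
        = (if a = y 0 then (0:ℝ) else t) * t ^ hammingDist x (Fin.tail y)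
          + (if a = y 0 then (1:ℝ) else t)
            * ((hammingDist x (Fin.tail y) : ℝ) * t ^ hammingDist x (Fin.tail y)) := by
      intro a x
      by_cases h : a = y 0 <;> simp [h, pow_add] <;> push_cast <;> ring
    simp only [expand, Finset.sum_add_distrib, ← Finset.mul_sum, ← Finset.sum_mul]
    rw [sum_eq_card hm (y 0) 0 t, sum_eq_card hm (y 0) 1 t, sum_pow n m hm t, ih]
    cases n with
    | zero => simp
    | succ k =>
      simp only [Nat.succ_sub_one, Nat.add_sub_cancel]
      push_cast
      ring

/-- The expected Hamming distance under the exponential distribution equals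
`h(ε) = n(m-1)e^{-ε}/(1+(m-1)e^{-ε})`. -/
theorem exp_distribution_mean_distance (n m : ℕ) (hm : 2 ≤ m) (ε : ℝ) (hε : 0 ≤ ε)
    (y : Fin n → Fin m) :
    (∑ x : Fin n → Fin m,
        (hammingDist x y : ℝ) * Real.exp (-ε * (hammingDist x y : ℝ))
          / (1 + ((m : ℝ) - 1) * Real.exp (-ε)) ^ n)
      = (n : ℝ) * ((m : ℝ) - 1) * Real.exp (-ε)
          / (1 + ((m : ℝ) - 1) * Real.exp (-ε)) := by
  have hm1 : 1 ≤ m := le_trans one_le_two hm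
  set t := Real.exp (-ε) with ht
  set A := 1 + ((m : ℝ) - 1) * t with hA
  have htpos : 0 < t := Real.exp_pos _
  have hApos : 0 < A := by
    have : (1:ℝ) ≤ (m:ℝ) := by exact_mod_cast hm1
    nlinarith
  have hterm : ∀ x : Fin n → Fin m,
      Real.exp (-ε * (hammingDist x y : ℝ)) = t ^ (hammingDist x y) := by
    intro x
    rw [ht, ← Real.exp_nat_mul]
    ring_nf
  calc (∑ x : Fin n → Fin m,
        (hammingDist x y : ℝ) * Real.exp (-ε * (hammingDist x y : ℝ)) / A ^ n)
      = (∑ x : Fin n → Fin m, (hammingDist x y : ℝ) * t ^ (hammingDist x y)) / A ^ n := by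
        rw [← Finset.sum_div]
        congr 1
        exact Finset.sum_congr rfl fun x _ => by rw [hterm x]
    _ = (n : ℝ) * ((m : ℝ) - 1) * t * A ^ (n - 1) / A ^ n := by
        rw [sum_mul_pow n m hm1 t y]
    _ = (n : ℝ) * ((m : ℝ) - 1) * t / A := by
        cases n with
        | zero => simp
        | succ k =>
          rw [Nat.succ_sub_one, pow_succ]
          field_simp
end

section
/- Let p(·|y) be any probability distribution on D^n such that p(x|y) ≤ e^{ε}·p(x'|y) for all neighboring x, x'. Let P_l = Σ_{x: d(x,y)=l} p(x|y) and N_l = C(n,l)(m-1)^l. Then for all 1 ≤ l ≤ n, (n-l+1)(m-1)·P_{l-1} ≤ e^{ε}·l·P_l, equivalently P_{l-1}/N_{l-1} ≤ e^{ε}·P_l/N_l. -/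
open Finset

lemma neighbor_struct {n m : ℕ} {x x' : Fin n → Fin m} (h : hammingDist x x' = 1) :
    ∃ i, x i ≠ x' i ∧ ∀ j, j ≠ i → x j = x' j := by
  have h' : (Finset.univ.filter fun i => x i ≠ x' i).card = 1 := h
  obtain ⟨i, hi⟩ := Finset.card_eq_one.mp h'
  refine ⟨i, ?_, ?_⟩
  · have : i ∈ Finset.univ.filter fun i => x i ≠ x' i := hi ▸ Finset.mem_singleton_self i
    exact (Finset.mem_filter.mp this).2
  · intro j hj
    by_contra hc
    have : j ∈ Finset.univ.filter fun i => x i ≠ x' i := Finset.mem_filter.mpr ⟨Finset.mem_univ _, hc⟩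
    rw [hi, Finset.mem_singleton] at this
    exact hj this

lemma key_lemma {n m l : ℕ} {y x x' : Fin n → Fin m} {i : Fin n}
    (hoff : ∀ j, j ≠ i → x j = x' j)
    (hx : hammingDist x y = l - 1) (hx' : hammingDist x' y = l) (hl : 1 ≤ l) :
    x i = y i ∧ x' i ≠ y i := by
  set S : Finset (Fin n) := Finset.univ.filter fun j => x j ≠ y j with hS
  set S' : Finset (Fin n) := Finset.univ.filter fun j => x' j ≠ y j with hS'
  have hcS : S.card = l - 1 := hx
  have hcS' : S'.card = l := hx'
  have herase : S.erase i = S'.erase i := by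
    ext j
    simp only [Finset.mem_erase, hS, hS', Finset.mem_filter, Finset.mem_univ, true_and]
    constructor
    · rintro ⟨hj, hj2⟩; exact ⟨hj, (hoff j hj) ▸ hj2⟩
    · rintro ⟨hj, hj2⟩; exact ⟨hj, (hoff j hj) ▸ hj2⟩
  have hiS' : i ∈ S' := by
    by_contra hc
    have h1 : S'.erase i = S' := Finset.erase_eq_of_notMem hc
    have h2 : (S.erase i).card ≤ S.card := Finset.card_erase_le
    rw [herase, h1, hcS', hcS] at h2
    omega
  have hiS : i ∉ S := by
    by_contra hc
    have h1 : (S.erase i).card = l - 1 - 1 := by rw [Finset.card_erase_of_mem hc, hcS]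
    have h2 : (S'.erase i).card = l - 1 := by rw [Finset.card_erase_of_mem hiS', hcS']
    rw [herase, h2] at h1
    have : 1 ≤ S.card := Finset.card_pos.mpr ⟨i, hc⟩
    rw [hcS] at this
    omega
  constructor
  · simpa [hS, Finset.mem_filter] using hiS
  · simpa [hS', Finset.mem_filter] using hiS'

lemma countB {n m l : ℕ} (y x' : Fin n → Fin m) (hl : 1 ≤ l) (hx' : hammingDist x' y = l) :
    ((Finset.univ.filter fun x : Fin n → Fin m => hammingDist x y = l - 1).filter
      fun x => hammingDist x x' = 1).card = l := by
  have hx'c : (Finset.univ.filter fun j => x' j ≠ y j).card = l := hx'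
  have hbij : (Finset.univ.filter fun j => x' j ≠ y j).card
      = ((Finset.univ.filter fun x : Fin n → Fin m => hammingDist x y = l - 1).filter
        fun x => hammingDist x x' = 1).card := by
    apply Finset.card_bij (fun i _ => Function.update x' i (y i))
    · intro i hi
      have hix : x' i ≠ y i := (Finset.mem_filter.mp hi).2
      refine Finset.mem_filter.mpr ⟨Finset.mem_filter.mpr ⟨Finset.mem_univ _, ?_⟩, ?_⟩
      · show (Finset.univ.filter fun j => Function.update x' i (y i) j ≠ y j).card = l - 1
        have heq : (Finset.univ.filter fun j => Function.update x' i (y i) j ≠ y j)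
            = (Finset.univ.filter fun j => x' j ≠ y j).erase i := by
          ext j
          simp only [Finset.mem_filter, Finset.mem_univ, true_and, Finset.mem_erase]
          by_cases hj : j = i
          · subst hj; simp [Function.update_self]
          · simp [Function.update_of_ne hj, hj]
        rw [heq, Finset.card_erase_of_mem hi, hx'c]
      · show (Finset.univ.filter fun j => Function.update x' i (y i) j ≠ x' j).card = 1
        have heq : (Finset.univ.filter fun j => Function.update x' i (y i) j ≠ x' j) = {i} := by
          ext j
          simp only [Finset.mem_filter, Finset.mem_univ, true_and, Finset.mem_singleton]
          by_cases hj : j = i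
          · subst hj; simp [Function.update_self, Ne.symm hix]
          · simp [Function.update_of_ne hj, hj]
        rw [heq, Finset.card_singleton]
    · intro i hi j hj hij
      have hix : x' i ≠ y i := (Finset.mem_filter.mp hi).2
      by_contra hc
      have h2 := congrFun hij i
      rw [Function.update_self, Function.update_of_ne hc] at h2
      exact hix h2.symm
    · intro x hx
      obtain ⟨hx1, hx2⟩ := Finset.mem_filter.mp hx
      have hxl : hammingDist x y = l - 1 := (Finset.mem_filter.mp hx1).2
      obtain ⟨i, hi1, hi2⟩ := neighbor_struct hx2
      obtain ⟨hxy, hx'y⟩ := key_lemma hi2 hxl hx' hl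
      refine ⟨i, Finset.mem_filter.mpr ⟨Finset.mem_univ _, hx'y⟩, ?_⟩
      funext j
      by_cases hj : j = i
      · subst hj; rw [Function.update_self, hxy]
      · rw [Function.update_of_ne hj, hi2 j hj]
  rw [← hbij, hx'c]

lemma countA {n m l : ℕ} (hm : 2 ≤ m) (y x : Fin n → Fin m) (hl : 1 ≤ l)
    (hx : hammingDist x y = l - 1) :
    ((Finset.univ.filter fun x' : Fin n → Fin m => hammingDist x' y = l).filter
      fun x' => hammingDist x x' = 1).card = (n - (l - 1)) * (m - 1) := by
  have hagree : (Finset.univ.filter fun i => x i = y i).card = n - (l - 1) := by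
    have h1 := Finset.card_filter_add_card_filter_not
      (s := (Finset.univ : Finset (Fin n))) (p := fun i => x i = y i)
    have h2 : (Finset.univ.filter fun i => ¬ x i = y i).card = l - 1 := hx
    simp only [Finset.card_univ, Fintype.card_fin] at h1
    omega
  have hsig : ((Finset.univ.filter fun i => x i = y i).sigma
      (fun i => (Finset.univ : Finset (Fin m)).erase (y i))).card = (n - (l - 1)) * (m - 1) := by
    rw [Finset.card_sigma]
    have : ∀ i ∈ (Finset.univ.filter fun i => x i = y i),
        ((Finset.univ : Finset (Fin m)).erase (y i)).card = m - 1 := by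
      intro i _
      rw [Finset.card_erase_of_mem (Finset.mem_univ _), Finset.card_univ, Fintype.card_fin]
    rw [Finset.sum_congr rfl this, Finset.sum_const, smul_eq_mul, hagree]
  rw [← hsig]
  symm
  apply Finset.card_bij (fun q _ => Function.update x q.1 q.2)
  · rintro ⟨i, a⟩ hq
    rw [Finset.mem_sigma] at hq
    obtain ⟨hi, ha⟩ := hq
    have hxy : x i = y i := (Finset.mem_filter.mp hi).2
    have hay : a ≠ y i := Finset.ne_of_mem_erase ha
    refine Finset.mem_filter.mpr ⟨Finset.mem_filter.mpr ⟨Finset.mem_univ _, ?_⟩, ?_⟩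
    · show (Finset.univ.filter fun j => Function.update x i a j ≠ y j).card = l
      have hxf : i ∉ (Finset.univ.filter fun j => x j ≠ y j) := by
        simp [hxy]
      have heq : (Finset.univ.filter fun j => Function.update x i a j ≠ y j)
          = insert i (Finset.univ.filter fun j => x j ≠ y j) := by
        ext j
        simp only [Finset.mem_filter, Finset.mem_univ, true_and, Finset.mem_insert]
        by_cases hj : j = i
        · subst hj; simp [Function.update_self, hay]
        · simp [Function.update_of_ne hj, hj]
      rw [heq, Finset.card_insert_of_notMem hxf]
      have : (Finset.univ.filter fun j => x j ≠ y j).card = l - 1 := hx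
      omega
    · show (Finset.univ.filter fun j => x j ≠ Function.update x i a j).card = 1
      have heq : (Finset.univ.filter fun j => x j ≠ Function.update x i a j) = {i} := by
        ext j
        simp only [Finset.mem_filter, Finset.mem_univ, true_and, Finset.mem_singleton]
        by_cases hj : j = i
        · subst hj; simp [Function.update_self, hxy, hay, Ne.symm hay]
        · simp [Function.update_of_ne hj, hj]
      rw [heq, Finset.card_singleton]
  · rintro ⟨i, a⟩ hq ⟨j, b⟩ hq' hij
    rw [Finset.mem_sigma] at hq hq'
    have hai : a ≠ x i := by
      have := (Finset.mem_filter.mp hq.1).2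
      rw [this]; exact Finset.ne_of_mem_erase hq.2
    have hbj : b ≠ x j := by
      have := (Finset.mem_filter.mp hq'.1).2
      rw [this]; exact Finset.ne_of_mem_erase hq'.2
    have hijeq : i = j := by
      by_contra hc
      have h2 := congrFun hij i
      rw [Function.update_self, Function.update_of_ne hc] at h2
      exact hai h2
    subst hijeq
    have h2 := congrFun hij i
    rw [Function.update_self, Function.update_self] at h2
    exact congrArg (Sigma.mk i) h2
  · intro x' hx'
    obtain ⟨hx1, hx2⟩ := Finset.mem_filter.mp hx'
    have hx'l : hammingDist x' y = l := (Finset.mem_filter.mp hx1).2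
    obtain ⟨i, hi1, hi2⟩ := neighbor_struct hx2
    have hoff : ∀ j, j ≠ i → x j = x' j := hi2
    obtain ⟨hxy, hx'y⟩ := key_lemma hoff hx hx'l hl
    refine ⟨⟨i, x' i⟩, ?_, ?_⟩
    · rw [Finset.mem_sigma]
      exact ⟨Finset.mem_filter.mpr ⟨Finset.mem_univ _, hxy⟩,
        Finset.mem_erase.mpr ⟨hx'y, Finset.mem_univ _⟩⟩
    · funext j
      by_cases hj : j = i
      · subst hj; rw [Function.update_self]
      · rw [Function.update_of_ne hj, hi2 j hj]

/-- For a distribution `p(·|y)` on `D^n` satisfying the `ε`-ratio condition on neighbors,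
the level probabilities `P_l = Σ_{x : d(x,y)=l} p(x|y)` satisfy
`(n-l+1)(m-1) P_{l-1} ≤ e^ε l P_l`, equivalently `P_{l-1}/N_{l-1} ≤ e^ε P_l/N_l`
with `N_l = C(n,l)(m-1)^l`. -/
theorem level_probability_recursion (n m : ℕ) (hm : 2 ≤ m) (ε : ℝ) (hε : 0 ≤ ε)
    (y : Fin n → Fin m) (p : (Fin n → Fin m) → ℝ)
    (hnn : ∀ x, 0 ≤ p x) (hsum : ∑ x, p x = 1)
    (hratio : ∀ x x' : Fin n → Fin m, hammingDist x x' = 1 → p x ≤ Real.exp ε * p x')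
    (l : ℕ) (hl1 : 1 ≤ l) (hln : l ≤ n) :
    ((n : ℝ) - l + 1) * ((m : ℝ) - 1) *
        (∑ x ∈ Finset.univ.filter (fun x : Fin n → Fin m => hammingDist x y = l - 1), p x)
      ≤ Real.exp ε * l *
        (∑ x ∈ Finset.univ.filter (fun x : Fin n → Fin m => hammingDist x y = l), p x) ∧
    (∑ x ∈ Finset.univ.filter (fun x : Fin n → Fin m => hammingDist x y = l - 1), p x)
        / ((n.choose (l - 1) : ℝ) * ((m : ℝ) - 1) ^ (l - 1))
      ≤ Real.exp ε *
        ((∑ x ∈ Finset.univ.filter (fun x : Fin n → Fin m => hammingDist x y = l), p x)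
          / ((n.choose l : ℝ) * ((m : ℝ) - 1) ^ l)) := by
  set S1 := Finset.univ.filter (fun x : Fin n → Fin m => hammingDist x y = l - 1) with hS1
  set S2 := Finset.univ.filter (fun x : Fin n → Fin m => hammingDist x y = l) with hS2
  set A := ∑ x ∈ S1, p x with hA
  set B := ∑ x ∈ S2, p x with hB
  have hcast : ((n - (l - 1)) * (m - 1) : ℕ) = (((n : ℝ) - l + 1) * ((m : ℝ) - 1)) := by
    have h1 : l - 1 ≤ n := le_trans (Nat.sub_le l 1) hln
    have hm1 : 1 ≤ m := by omega
    push_cast [Nat.cast_sub h1, Nat.cast_sub hl1, Nat.cast_sub hm1]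
    ring
  have first : ((n : ℝ) - l + 1) * ((m : ℝ) - 1) * A ≤ Real.exp ε * l * B := by
    have hLHS : ((n : ℝ) - l + 1) * ((m : ℝ) - 1) * A
        = ∑ x ∈ S1, ∑ x' ∈ S2, (if hammingDist x x' = 1 then p x else 0) := by
      rw [hA, Finset.mul_sum]
      refine Finset.sum_congr rfl (fun x hx => ?_)
      have hxl : hammingDist x y = l - 1 := (Finset.mem_filter.mp hx).2
      rw [← Finset.sum_filter, Finset.sum_const, nsmul_eq_mul,
        countA hm y x hl1 hxl, hcast, mul_comm]
    have hRHS : Real.exp ε * l * B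
        = ∑ x ∈ S1, ∑ x' ∈ S2, (if hammingDist x x' = 1 then Real.exp ε * p x' else 0) := by
      rw [Finset.sum_comm, hB, Finset.mul_sum]
      refine Finset.sum_congr rfl (fun x' hx' => ?_)
      have hx'l : hammingDist x' y = l := (Finset.mem_filter.mp hx').2
      rw [← Finset.sum_filter, Finset.sum_const, nsmul_eq_mul, countB y x' hl1 hx'l]
      ring
    rw [hLHS, hRHS]
    refine Finset.sum_le_sum (fun x _ => Finset.sum_le_sum (fun x' _ => ?_))
    by_cases hd : hammingDist x x' = 1
    · simp only [hd, if_true]; exact hratio x x' hd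
    · simp [hd]
  refine ⟨first, ?_⟩
  have hm1 : (0:ℝ) < (m:ℝ) - 1 := by
    have : (2:ℝ) ≤ m := by exact_mod_cast hm
    linarith
  have hN1 : (0:ℝ) < (n.choose (l - 1) : ℝ) * ((m : ℝ) - 1) ^ (l - 1) := by
    apply mul_pos
    · exact_mod_cast Nat.choose_pos (le_trans (Nat.sub_le l 1) hln)
    · positivity
  have hN2 : (0:ℝ) < (n.choose l : ℝ) * ((m : ℝ) - 1) ^ l := by
    apply mul_pos
    · exact_mod_cast Nat.choose_pos hln
    · positivity
  have hid : (l : ℝ) * ((n.choose l : ℝ) * ((m : ℝ) - 1) ^ l)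
      = (((n : ℝ) - l + 1) * ((m : ℝ) - 1)) * ((n.choose (l - 1) : ℝ) * ((m : ℝ) - 1) ^ (l - 1)) := by
    have h0 : n.choose ((l-1)+1) * ((l-1)+1) = n.choose (l-1) * (n - (l-1)) :=
      Nat.choose_succ_right_eq n (l-1)
    have hl' : (l-1)+1 = l := by omega
    rw [hl'] at h0
    have h1 : l - 1 ≤ n := le_trans (Nat.sub_le l 1) hln
    have hcast2 : ((n.choose l : ℝ)) * (l:ℝ) = (n.choose (l-1) : ℝ) * ((n:ℝ) - ((l:ℝ) - 1)) := by
      have := congrArg (Nat.cast : ℕ → ℝ) h0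
      push_cast [Nat.cast_sub h1, Nat.cast_sub hl1] at this
      linarith [this]
    have hpow : ((m : ℝ) - 1) ^ l = ((m : ℝ) - 1) ^ (l - 1) * ((m : ℝ) - 1) := by
      conv_lhs => rw [← hl']
      rw [pow_succ]
    rw [hpow]
    linear_combination (((m:ℝ)-1)^(l-1) * ((m:ℝ)-1)) * hcast2
  rw [← mul_div_assoc, div_le_div_iff₀ hN1 hN2]
  have hl0 : (0:ℝ) < l := by exact_mod_cast hl1
  have key1 : (((n:ℝ) - l + 1) * ((m:ℝ) - 1) * A) * ((n.choose (l - 1) : ℝ) * ((m : ℝ) - 1) ^ (l - 1))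
      = (l:ℝ) * (A * ((n.choose l : ℝ) * ((m : ℝ) - 1) ^ l)) := by
    linear_combination (-A) * hid
  have key2 := mul_le_mul_of_nonneg_right first (le_of_lt hN1)
  rw [key1] at key2
  have key3 : (Real.exp ε * ↑l * B) * ((n.choose (l - 1) : ℝ) * ((m : ℝ) - 1) ^ (l - 1))
      = (l:ℝ) * (Real.exp ε * B * ((n.choose (l - 1) : ℝ) * ((m : ℝ) - 1) ^ (l - 1))) := by ring
  rw [key3] at key2
  exact le_of_mul_le_mul_left key2 hl0
end

section
/- Under the hypotheses that P_l ≥ 0, Σ_{l=0}^n P_l = 1, and P_{l-1}/N_{l-1} ≤ e^{ε}·P_l/N_l for 1 ≤ l ≤ n (with N_l = C(n,l)(m-1)^l), one has P_n ≥ N_n e^{-nε}/(1+(m-1)e^{-ε})^n. -/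
/-- If `(P_0,…,P_n)` is nonnegative, sums to one, and satisfies
`P_{l-1}/N_{l-1} ≤ e^ε P_l/N_l` with `N_l = C(n,l)(m-1)^l`, then
`P_n ≥ N_n e^{-nε}/(1+(m-1)e^{-ε})^n`. -/
theorem tail_probability_lower_bound (n m : ℕ) (hn : 1 ≤ n) (hm : 2 ≤ m)
    (ε : ℝ) (hε : 0 ≤ ε) (P : ℕ → ℝ)
    (hnn : ∀ l, l ≤ n → 0 ≤ P l)
    (hsum : ∑ l ∈ Finset.range (n + 1), P l = 1)
    (hratio : ∀ l, 1 ≤ l → l ≤ n →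
      P (l - 1) / ((n.choose (l - 1) : ℝ) * ((m : ℝ) - 1) ^ (l - 1))
        ≤ Real.exp ε * (P l / ((n.choose l : ℝ) * ((m : ℝ) - 1) ^ l))) :
    P n ≥ ((n.choose n : ℝ) * ((m : ℝ) - 1) ^ n) * Real.exp (-(n : ℝ) * ε)
        / (1 + ((m : ℝ) - 1) * Real.exp (-ε)) ^ n := by
  have hm1 : (1:ℝ) ≤ (m:ℝ) - 1 := by
    have : (2:ℝ) ≤ m := by exact_mod_cast hm
    linarith
  have hm0 : (0:ℝ) < (m:ℝ) - 1 := by linarith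
  set N : ℕ → ℝ := fun l => (n.choose l : ℝ) * ((m : ℝ) - 1) ^ l with hN
  have hNpos : ∀ l, l ≤ n → 0 < N l := by
    intro l hl
    apply mul_pos
    · exact_mod_cast Nat.choose_pos hl
    · positivity
  have hPn := hnn n le_rfl
  have hNn := hNpos n le_rfl
  have hPNnn : 0 ≤ P n / N n := div_nonneg hPn hNn.le
  have key : ∀ k, k ≤ n → P (n - k) / N (n - k) ≤ Real.exp (k * ε) * (P n / N n) := by
    intro k
    induction k with
    | zero => intro _; simp
    | succ k ih =>
      intro hk
      have hk' : k ≤ n := Nat.le_of_succ_le hk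
      have h1 := ih hk'
      have hl1 : 1 ≤ n - k := by omega
      have hl2 : n - k ≤ n := by omega
      have h2 := hratio (n - k) hl1 hl2
      have heq : n - (k + 1) = (n - k) - 1 := by omega
      rw [heq]
      calc P (n - k - 1) / N (n - k - 1) ≤ Real.exp ε * (P (n-k) / N (n-k)) := h2
        _ ≤ Real.exp ε * (Real.exp (k * ε) * (P n / N n)) :=
            mul_le_mul_of_nonneg_left h1 (Real.exp_pos ε).le
        _ = Real.exp ((k+1 : ℕ) * ε) * (P n / N n) := by
            rw [← mul_assoc, ← Real.exp_add]; push_cast; ring_nf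
  have key2 : ∀ l, l ≤ n → P l ≤ N l * Real.exp (((n - l : ℕ) : ℝ) * ε) * (P n / N n) := by
    intro l hl
    have h := key (n - l) (Nat.sub_le n l)
    rw [Nat.sub_sub_self hl] at h
    have hNl := hNpos l hl
    rw [div_le_iff₀ hNl] at h
    calc P l ≤ Real.exp (((n - l : ℕ) : ℝ) * ε) * (P n / N n) * N l := h
      _ = N l * Real.exp (((n - l : ℕ) : ℝ) * ε) * (P n / N n) := by ring
  set A : ℝ := ((m:ℝ) - 1) + Real.exp ε with hA
  have hApos : 0 < A := by positivity
  have hsumN : ∑ l ∈ Finset.range (n + 1), N l * Real.exp (((n - l : ℕ) : ℝ) * ε) = A ^ n := by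
    rw [hA, add_pow]
    apply Finset.sum_congr rfl
    intro l hl
    have : Real.exp (((n - l : ℕ) : ℝ) * ε) = Real.exp ε ^ (n - l) := by
      rw [← Real.exp_nat_mul]
    rw [this, hN]
    ring
  have hmain : (1:ℝ) ≤ A ^ n * (P n / N n) := by
    calc (1:ℝ) = ∑ l ∈ Finset.range (n + 1), P l := hsum.symm
      _ ≤ ∑ l ∈ Finset.range (n + 1), N l * Real.exp (((n - l : ℕ) : ℝ) * ε) * (P n / N n) := by
          apply Finset.sum_le_sum
          intro l hl
          exact key2 l (Nat.lt_succ_iff.mp (Finset.mem_range.mp hl))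
      _ = (∑ l ∈ Finset.range (n + 1), N l * Real.exp (((n - l : ℕ) : ℝ) * ε)) * (P n / N n) := by
          rw [Finset.sum_mul]
      _ = A ^ n * (P n / N n) := by rw [hsumN]
  have hfinal : N n ≤ P n * A ^ n := by
    have := mul_le_mul_of_nonneg_left hmain hNn.le
    rw [mul_one] at this
    calc N n ≤ N n * (A ^ n * (P n / N n)) := this
      _ = P n * A ^ n * (N n / N n) := by ring
      _ = P n * A ^ n := by rw [div_self hNn.ne', mul_one]
  have hrhs : N n * Real.exp (-(n : ℝ) * ε) / (1 + ((m : ℝ) - 1) * Real.exp (-ε)) ^ n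
      = N n / A ^ n := by
    have h1 : 1 + ((m : ℝ) - 1) * Real.exp (-ε) = Real.exp (-ε) * A := by
      rw [hA, show Real.exp (-ε) * (((m:ℝ) - 1) + Real.exp ε)
        = ((m:ℝ)-1) * Real.exp (-ε) + Real.exp (-ε + ε) from by
          rw [Real.exp_add]; ring]
      simp [add_comm]
    rw [h1, mul_pow, ← Real.exp_nat_mul]
    rw [show (n : ℝ) * (-ε) = -(n:ℝ) * ε by ring]
    rw [mul_comm (N n), mul_div_mul_left _ _ (Real.exp_ne_zero _)]
  rw [ge_iff_le, show ((n.choose n : ℝ) * ((m : ℝ) - 1) ^ n) = N n from rfl, hrhs,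
    div_le_iff₀ (by positivity)]
  exact hfinal
end

section
/- Let p(·|y) be a probability distribution on D^n satisfying p(x|y) ≤ e^{ε}p(x'|y) for all neighboring x,x'. Then the expected Hamming distance Σ_x p(x|y)·d(x,y) ≥ h(ε) = n/(1 + e^{ε}/(m-1)). -/
open Finset

/-- Any distribution on `D^n` satisfying the `ε`-ratio condition on neighboring elements has
expected Hamming distance to `y` at least `h(ε) = n/(1+e^ε/(m-1))`. -/
theorem expected_distance_lower_bound (n m : ℕ) (hm : 2 ≤ m) (ε : ℝ) (hε : 0 ≤ ε)
    (y : Fin n → Fin m) (p : (Fin n → Fin m) → ℝ)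
    (hnn : ∀ x, 0 ≤ p x) (hsum : ∑ x, p x = 1)
    (hratio : ∀ x x' : Fin n → Fin m, hammingDist x x' = 1 → p x ≤ Real.exp ε * p x') :
    (∑ x : Fin n → Fin m, p x * (hammingDist x y : ℝ))
      ≥ (n : ℝ) / (1 + Real.exp ε / ((m : ℝ) - 1)) := by
  set E := Real.exp ε with hEdef
  have hE1 : (1:ℝ) ≤ E := Real.one_le_exp hε
  have hm1 : (1:ℝ) ≤ (m:ℝ) - 1 := by
    have : (2:ℝ) ≤ (m:ℝ) := by exact_mod_cast hm
    linarith
  set q : Fin n → ℝ := fun i => ∑ x ∈ univ.filter (fun x => x i ≠ y i), p x with hq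
  -- rewrite the expected distance as a sum over coordinates
  have hswap : (∑ x : Fin n → Fin m, p x * (hammingDist x y : ℝ)) = ∑ i, q i := by
    have h1 : ∀ x : Fin n → Fin m, p x * (hammingDist x y : ℝ)
        = ∑ i, if x i ≠ y i then p x else 0 := by
      intro x
      rw [← Finset.sum_filter, hammingDist, Finset.sum_const, nsmul_eq_mul, mul_comm]
    simp_rw [h1]
    rw [Finset.sum_comm]
    refine Finset.sum_congr rfl fun i _ => ?_
    simp [hq, Finset.sum_filter]
  rw [hswap]
  -- per coordinate bound
  have hcoord : ∀ i, ((m:ℝ)-1)/(((m:ℝ)-1) + E) ≤ q i := by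
    intro i
    have hA : ∑ x ∈ univ.filter (fun x => x i = y i), p x = 1 - q i := by
      have h := Finset.sum_filter_add_sum_filter_not univ (fun x => x i = y i) p
      rw [hsum] at h
      have : q i = ∑ x ∈ univ.filter (fun x => ¬ (x i = y i)), p x := rfl
      linarith [h, this]
    have key : ((m:ℝ)-1) * (1 - q i) ≤ E * q i := by
      rw [← hA]
      have hcard : (univ.erase (y i)).card = m - 1 := by
        rw [Finset.card_erase_of_mem (Finset.mem_univ _), Finset.card_univ, Fintype.card_fin]
      have step1 : ((m:ℝ)-1) * (∑ x ∈ univ.filter (fun x => x i = y i), p x)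
          = ∑ x ∈ univ.filter (fun x => x i = y i), ∑ a ∈ univ.erase (y i), p x := by
        rw [Finset.mul_sum]
        refine Finset.sum_congr rfl fun x _ => ?_
        rw [Finset.sum_const, hcard, nsmul_eq_mul]
        have : ((m - 1 : ℕ) : ℝ) = (m:ℝ) - 1 := by
          have : (1:ℕ) ≤ m := by omega
          push_cast [this]; ring
        rw [this]
      rw [step1]
      have step2 : ∑ x ∈ univ.filter (fun x => x i = y i), ∑ a ∈ univ.erase (y i), p x
          ≤ ∑ x ∈ univ.filter (fun x => x i = y i), ∑ a ∈ univ.erase (y i),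
              E * p (Function.update x i a) := by
        refine Finset.sum_le_sum fun x hx => Finset.sum_le_sum fun a ha => ?_
        apply hratio
        -- hammingDist x (update x i a) = 1
        have hxy : x i = y i := (Finset.mem_filter.mp hx).2
        have hay : a ≠ y i := Finset.ne_of_mem_erase ha
        rw [hammingDist]
        rw [Finset.card_eq_one]
        refine ⟨i, ?_⟩
        ext j
        simp only [Finset.mem_filter, Finset.mem_univ, true_and, Finset.mem_singleton]
        constructor
        · intro hj
          by_contra hji
          rw [Function.update_of_ne hji] at hj
          exact hj rfl
        · intro hj
          subst hj
          rw [Function.update_self, hxy]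
          exact fun h => hay h.symm
      have step3 : ∑ x ∈ univ.filter (fun x => x i = y i), ∑ a ∈ univ.erase (y i),
            E * p (Function.update x i a) = E * q i := by
        rw [hq]
        simp only [← Finset.mul_sum]
        congr 1
        rw [← Finset.sum_product']
        refine Finset.sum_nbij' (fun pa => Function.update pa.1 i pa.2)
          (fun x' => (Function.update x' i (y i), x' i)) ?_ ?_ ?_ ?_ ?_
        · rintro ⟨x, a⟩ hxa
          rw [Finset.mem_product] at hxa
          simp only [Finset.mem_filter, Finset.mem_univ, true_and]
          rw [Function.update_self]
          exact Finset.ne_of_mem_erase hxa.2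
        · intro x' hx'
          simp only [Finset.mem_filter, Finset.mem_univ, true_and] at hx'
          rw [Finset.mem_product]
          constructor
          · simp only [Finset.mem_filter, Finset.mem_univ, true_and, Function.update_self]
          · exact Finset.mem_erase.mpr ⟨hx', Finset.mem_univ _⟩
        · rintro ⟨x, a⟩ hxa
          rw [Finset.mem_product] at hxa
          have hxy : x i = y i := (Finset.mem_filter.mp hxa.1).2
          simp only [Function.update_self, Function.update_idem, Prod.mk.injEq]
          refine ⟨?_, trivial⟩
          rw [← hxy]; exact Function.update_eq_self i x
        · intro x' hx'
          show Function.update (Function.update x' i (y i)) i (x' i) = x'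
          rw [Function.update_idem]
          exact Function.update_eq_self i x'
        · rintro ⟨x, a⟩ hxa
          rfl
      linarith
    have hpos : (0:ℝ) < ((m:ℝ)-1) + E := by linarith
    rw [div_le_iff₀ hpos]
    nlinarith [key]
  have hsum2 : (n : ℝ) / (1 + E / ((m : ℝ) - 1))
      = ∑ _i : Fin n, ((m:ℝ)-1)/(((m:ℝ)-1) + E) := by
    rw [Finset.sum_const, Finset.card_univ, Fintype.card_fin, nsmul_eq_mul]
    have h1 : ((m:ℝ) - 1) ≠ 0 := by linarith
    have h2 : ((m:ℝ)-1) + E ≠ 0 := by linarith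
    field_simp
  rw [ge_iff_le, hsum2]
  exact Finset.sum_le_sum fun i _ => hcoord i
end

section
/- Suppose (P_0,...,P_n) is a nonnegative sequence with P_{l-1}/N_{l-1} ≤ e^{ε} P_l/N_l for 1 ≤ l ≤ n and Σ_l P_l = 1, where N_l = C(n,l)(m-1)^l. Then Σ_{l=0}^n l·P_l ≥ Σ_{l=0}^n l·N_l e^{-lε}/(1+(m-1)e^{-ε})^n = n(m-1)e^{-ε}/(1+(m-1)e^{-ε}). -/
/-!
Write `x = (m-1)e^{-ε}`, so that `Q_l = C(n,l) x^l / (1+x)^n`. The ratio hypothesis says exactly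
that the likelihood ratio `P_l / Q_l`, which is proportional to `e^{lε} P_l / N_l`, is nondecreasing
in `l`. By the weighted Chebyshev sum inequality (with weights `Q_l`), the increasing functions `l` and
`P_l / Q_l` are positively correlated under `Q`, i.e. `E_Q[l] · E_Q[P/Q] ≤ E_Q[l · P/Q]`, which is
`E_Q[l] ≤ E_P[l]`. The mean of `Q` is `n x / (1+x)` by the binomial theorem.
-/

open Finset

theorem MonovaryOn.sum_mul_sum_le_sum_mul_sum_of_nonneg {ι : Type*} {s : Finset ι}
    {f g w : ι → ℝ} (hfg : MonovaryOn f g s) (hw : ∀ i ∈ s, 0 ≤ w i) :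
    (∑ i ∈ s, f i * w i) * ∑ i ∈ s, g i * w i ≤ (∑ i ∈ s, f i * g i * w i) * ∑ i ∈ s, w i := by
  have hpair : 0 ≤ ∑ i ∈ s, ∑ j ∈ s, (f j - f i) * (g j - g i) * (w i * w j) :=
    sum_nonneg fun i hi => sum_nonneg fun j hj =>
      mul_nonneg (hfg.sub_mul_sub_nonneg hi hj) (mul_nonneg (hw i hi) (hw j hj))
  have hexpand : ∑ i ∈ s, ∑ j ∈ s, (f j - f i) * (g j - g i) * (w i * w j)
      = ∑ i ∈ s, ∑ j ∈ s, (f i * g i * w i * w j + f j * g j * w j * w i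
          - f i * w i * (g j * w j) - f j * w j * (g i * w i)) :=
    sum_congr rfl fun i _ => sum_congr rfl fun j _ => by ring
  simp only [hexpand, sum_add_distrib, sum_sub_distrib, ← mul_sum, ← sum_mul] at hpair
  linarith

theorem MonovaryOn.sum_mul_le_sum_mul_mul_sum {ι : Type*} {s : Finset ι} {f g w P : ι → ℝ}
    (hfg : MonovaryOn f g s) (hw : ∀ i ∈ s, 0 ≤ w i) (hP : ∀ i ∈ s, P i = g i * w i)
    (hP₁ : ∑ i ∈ s, P i = 1) :
    ∑ i ∈ s, f i * w i ≤ (∑ i ∈ s, f i * P i) * ∑ i ∈ s, w i := by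
  have hgw : ∑ i ∈ s, g i * w i = 1 := by
    rw [← hP₁]
    exact sum_congr rfl fun i hi => (hP i hi).symm
  have hfgw : ∑ i ∈ s, f i * g i * w i = ∑ i ∈ s, f i * P i :=
    sum_congr rfl fun i hi => by rw [hP i hi, mul_assoc]
  simpa only [hgw, hfgw, mul_one] using hfg.sum_mul_sum_le_sum_mul_sum_of_nonneg hw

theorem monotoneOn_pow_mul_of_le_mul {a : ℕ → ℝ} {c : ℝ} {n : ℕ} (hc : 0 ≤ c)
    (h : ∀ l, 1 ≤ l → l ≤ n → a (l - 1) ≤ c * a l) :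
    MonotoneOn (fun l => c ^ l * a l) (Set.Iic n) := by
  refine monotoneOn_of_le_add_one Set.ordConnected_Iic fun l _ _ hl => ?_
  have hstep := h (l + 1) (by omega) hl
  rw [Nat.add_sub_cancel] at hstep
  calc c ^ l * a l ≤ c ^ l * (c * a (l + 1)) := by gcongr
    _ = c ^ (l + 1) * a (l + 1) := by ring

section Binomial

variable {R : Type*} [CommSemiring R]

theorem sum_range_choose_mul_pow (n : ℕ) (x : R) :
    ∑ l ∈ range (n + 1), (n.choose l : R) * x ^ l = (1 + x) ^ n := by
  simp [add_comm 1 x, add_pow, mul_comm]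

theorem sum_range_mul_choose_mul_pow (n : ℕ) (x : R) :
    ∑ l ∈ range (n + 1), (l : R) * ((n.choose l : R) * x ^ l) = n * x * (1 + x) ^ (n - 1) := by
  cases n with
  | zero => simp
  | succ n =>
    rw [sum_range_succ', Nat.add_sub_cancel, ← sum_range_choose_mul_pow, mul_sum]
    simp only [Nat.cast_zero, zero_mul, add_zero]
    refine sum_congr rfl fun l _ => ?_
    have h := congrArg (Nat.cast : ℕ → R) (Nat.add_one_mul_choose_eq n l)
    push_cast at h ⊢
    calc ((l : R) + 1) * ((n + 1).choose (l + 1) * x ^ (l + 1))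
        = ((n + 1).choose (l + 1) * ((l : R) + 1)) * (x ^ l * x) := by ring
      _ = _ := by rw [← h]; ring

end Binomial

theorem sum_range_mul_choose_mul_pow_div {K : Type*} [Field K] (n : ℕ) {x : K}
    (hx : 1 + x ≠ 0) :
    ∑ l ∈ range (n + 1), (l : K) * ((n.choose l : K) * x ^ l / (1 + x) ^ n)
      = n * x / (1 + x) := by
  simp only [mul_div_assoc', ← sum_div, sum_range_mul_choose_mul_pow]
  cases n with
  | zero => simp
  | succ n => rw [Nat.add_sub_cancel, pow_succ]; field_simp

theorem sequence_mean_lower_bound_general (n m : ℕ) (hm : 2 ≤ m)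
    (ε : ℝ) (P : ℕ → ℝ)
    (hsum : ∑ l ∈ Finset.range (n + 1), P l = 1)
    (hratio : ∀ l, 1 ≤ l → l ≤ n →
      P (l - 1) / ((n.choose (l - 1) : ℝ) * ((m : ℝ) - 1) ^ (l - 1))
        ≤ Real.exp ε * (P l / ((n.choose l : ℝ) * ((m : ℝ) - 1) ^ l))) :
    (∑ l ∈ Finset.range (n + 1), (l : ℝ) * P l)
      ≥ ∑ l ∈ Finset.range (n + 1),
          (l : ℝ) * ((n.choose l : ℝ) * ((m : ℝ) - 1) ^ l * Real.exp (-(l : ℝ) * ε)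
            / (1 + ((m : ℝ) - 1) * Real.exp (-ε)) ^ n) ∧
    (∑ l ∈ Finset.range (n + 1),
        (l : ℝ) * ((n.choose l : ℝ) * ((m : ℝ) - 1) ^ l * Real.exp (-(l : ℝ) * ε)
          / (1 + ((m : ℝ) - 1) * Real.exp (-ε)) ^ n))
      = (n : ℝ) * ((m : ℝ) - 1) * Real.exp (-ε) / (1 + ((m : ℝ) - 1) * Real.exp (-ε)) := by
  have hm₁ : 0 < (m : ℝ) - 1 := by
    have : (2 : ℝ) ≤ m := by exact_mod_cast hm
    linarith
  set x := ((m : ℝ) - 1) * Real.exp (-ε) with hx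
  have hx₀ : 0 < x := by positivity
  have hQ (l : ℕ) : (n.choose l : ℝ) * ((m : ℝ) - 1) ^ l * Real.exp (-(l : ℝ) * ε)
      = n.choose l * x ^ l := by
    rw [hx, mul_pow, ← Real.exp_nat_mul]; ring_nf
  simp only [hQ]
  refine ⟨?_, by rw [sum_range_mul_choose_mul_pow_div n (by positivity), mul_assoc]⟩
  set ratio : ℕ → ℝ := fun l => Real.exp ε ^ l * (P l / (n.choose l * ((m : ℝ) - 1) ^ l))
  have hP : ∀ l ∈ range (n + 1), P l = ratio l * (n.choose l * x ^ l) := by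
    intro l hl
    have : (n.choose l : ℝ) ≠ 0 := by
      exact_mod_cast (Nat.choose_pos (mem_range_succ_iff.mp hl)).ne'
    simp only [ratio, hx, mul_pow, Real.exp_neg, inv_pow]
    field_simp
  have hratio_mono : MonotoneOn ratio (range (n + 1)) :=
    (monotoneOn_pow_mul_of_le_mul (Real.exp_pos ε).le hratio).mono
      fun l hl => Set.mem_Iic.mpr (mem_range_succ_iff.mp (mem_coe.mp hl))
  have hmean := ((Nat.mono_cast.monotoneOn _).monovaryOn hratio_mono).sum_mul_le_sum_mul_mul_sum
    (fun l _ => by positivity) hP hsum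
  rw [sum_range_choose_mul_pow] at hmean
  simp only [ge_iff_le, mul_div_assoc', ← sum_div]
  rwa [div_le_iff₀ (by positivity)]

/-- If a nonnegative sequence `(P_0,…,P_n)` sums to one and satisfies
`P_{l-1}/N_{l-1} ≤ e^ε P_l/N_l` with `N_l = C(n,l)(m-1)^l`, then its mean
`Σ l P_l` is at least the mean of the binomial-type distribution
`Q_l = N_l e^{-lε}/(1+(m-1)e^{-ε})^n`, namely `n(m-1)e^{-ε}/(1+(m-1)e^{-ε})`. -/
theorem sequence_mean_lower_bound (n m : ℕ) (hn : 1 ≤ n) (hm : 2 ≤ m)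
    (ε : ℝ) (hε : 0 ≤ ε) (P : ℕ → ℝ)
    (hnn : ∀ l, l ≤ n → 0 ≤ P l)
    (hsum : ∑ l ∈ Finset.range (n + 1), P l = 1)
    (hratio : ∀ l, 1 ≤ l → l ≤ n →
      P (l - 1) / ((n.choose (l - 1) : ℝ) * ((m : ℝ) - 1) ^ (l - 1))
        ≤ Real.exp ε * (P l / ((n.choose l : ℝ) * ((m : ℝ) - 1) ^ l))) :
    (∑ l ∈ Finset.range (n + 1), (l : ℝ) * P l)
      ≥ ∑ l ∈ Finset.range (n + 1),
          (l : ℝ) * ((n.choose l : ℝ) * ((m : ℝ) - 1) ^ l * Real.exp (-(l : ℝ) * ε)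
            / (1 + ((m : ℝ) - 1) * Real.exp (-ε)) ^ n) ∧
    (∑ l ∈ Finset.range (n + 1),
        (l : ℝ) * ((n.choose l : ℝ) * ((m : ℝ) - 1) ^ l * Real.exp (-(l : ℝ) * ε)
          / (1 + ((m : ℝ) - 1) * Real.exp (-ε)) ^ n))
      = (n : ℝ) * ((m : ℝ) - 1) * Real.exp (-ε) / (1 + ((m : ℝ) - 1) * Real.exp (-ε)) :=
  sequence_mean_lower_bound_general n m hm ε P hsum hratio
end

section
/- If a mechanism (conditional distribution p_{Y|X} on D^n × D^n) satisfies ε-identifiability, i.e., the posterior satisfies p_{X|Y}(x|y) ≤ e^{ε} p_{X|Y}(x'|y) for all neighboring x,x' and all y, then the prior satisfies p_X(x) ≤ e^{ε} p_X(x') for all neighboring x,x'. Consequently, ε-identifiability is impossible for any ε < ε_X := max over neighboring pairs of ln(p_X(x)/p_X(x')). -/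
/-- If a mechanism satisfies `ε`-identifiability (its Bayes posterior satisfies the `ε`-ratio
condition on neighbors for every output `y`), then the prior satisfies
`p_X(x) ≤ e^ε p_X(x')` for all neighbors; consequently `ε` is at least
`ε_X = max_{x ∼ x'} ln(p_X(x)/p_X(x'))`. -/
theorem identifiability_implies_prior_bound (n m : ℕ) (hm : 2 ≤ m) (ε : ℝ) (hε : 0 ≤ ε)
    (pX : (Fin n → Fin m) → ℝ) (pYX : (Fin n → Fin m) → (Fin n → Fin m) → ℝ)
    (hpXpos : ∀ x, 0 < pX x) (hpXsum : ∑ x, pX x = 1)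
    (hpYXnn : ∀ y x, 0 ≤ pYX y x) (hpYXsum : ∀ x, ∑ y, pYX y x = 1)
    (hid : ∀ x x' y : Fin n → Fin m, hammingDist x x' = 1 →
      pX x * pYX y x / (∑ x'', pX x'' * pYX y x'')
        ≤ Real.exp ε * (pX x' * pYX y x' / (∑ x'', pX x'' * pYX y x''))) :
    (∀ x x' : Fin n → Fin m, hammingDist x x' = 1 → pX x ≤ Real.exp ε * pX x') ∧
    (∀ x x' : Fin n → Fin m, hammingDist x x' = 1 → Real.log (pX x / pX x') ≤ ε) := by
  have key : ∀ x x' : Fin n → Fin m, hammingDist x x' = 1 → pX x ≤ Real.exp ε * pX x' := by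
    intro x x' hxx'
    have hterm : ∀ y, pX x * pYX y x ≤ Real.exp ε * (pX x' * pYX y x') := by
      intro y
      set S := ∑ x'', pX x'' * pYX y x'' with hS
      have hSnn : 0 ≤ S := Finset.sum_nonneg fun i _ =>
        mul_nonneg (hpXpos i).le (hpYXnn y i)
      rcases eq_or_lt_of_le hSnn with hS0 | hSpos
      · have hz : ∀ i ∈ Finset.univ, pX i * pYX y i = 0 := by
          rw [← Finset.sum_eq_zero_iff_of_nonneg
            (fun i _ => mul_nonneg (hpXpos i).le (hpYXnn y i))]
          exact hS0.symm
        have h1 : pX x * pYX y x = 0 := hz x (Finset.mem_univ x)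
        have h2 : pX x' * pYX y x' = 0 := hz x' (Finset.mem_univ x')
        rw [h1, h2, mul_zero]
      · have h0 : pX x * pYX y x / S ≤ Real.exp ε * (pX x' * pYX y x' / S) :=
          hid x x' y hxx'
        calc pX x * pYX y x = pX x * pYX y x / S * S := by field_simp
          _ ≤ Real.exp ε * (pX x' * pYX y x' / S) * S :=
              mul_le_mul_of_nonneg_right h0 hSpos.le
          _ = Real.exp ε * (pX x' * pYX y x') := by field_simp
    calc pX x = pX x * ∑ y, pYX y x := by rw [hpYXsum x, mul_one]
      _ = ∑ y, pX x * pYX y x := by rw [Finset.mul_sum]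
      _ ≤ ∑ y, Real.exp ε * (pX x' * pYX y x') := Finset.sum_le_sum fun y _ => hterm y
      _ = Real.exp ε * (pX x' * ∑ y, pYX y x') := by rw [Finset.mul_sum, Finset.mul_sum]
      _ = Real.exp ε * pX x' := by rw [hpYXsum x', mul_one]
  refine ⟨key, fun x x' hxx' => ?_⟩
  have h := key x x' hxx'
  have hx' := hpXpos x'
  rw [Real.log_le_iff_le_exp (div_pos (hpXpos x) hx'), div_le_iff₀ hx']
  linarith
end

section
/- The privacy–distortion function under identifiability satisfies ε_i*(D) ≥ h^{-1}(D) = ln(n/D − 1) + ln(m−1) for all 0 < D ≤ n·(m−1)/m: any mechanism whose posterior satisfies ε-identifiability with ε < h^{-1}(D) must have expected Hamming distortion E[d(X,Y)] > D. -/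
open Finset

/-- Lower bound on the privacy–distortion function under identifiability: for
`0 < D ≤ n(m-1)/m`, any mechanism whose Bayes posterior satisfies `ε`-identifiability with
`ε < h⁻¹(D) = ln(n/D - 1) + ln(m-1)` has expected Hamming distortion exceeding `D`. -/
theorem identifiability_privacy_distortion_lower_bound (n m : ℕ) (hn : 1 ≤ n) (hm : 2 ≤ m)
    (D : ℝ) (hD0 : 0 < D) (hDn : D ≤ (n : ℝ) * ((m : ℝ) - 1) / (m : ℝ))
    (ε : ℝ) (hε : 0 ≤ ε)
    (hεlt : ε < Real.log ((n : ℝ) / D - 1) + Real.log ((m : ℝ) - 1))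
    (pX : (Fin n → Fin m) → ℝ) (pYX : (Fin n → Fin m) → (Fin n → Fin m) → ℝ)
    (hpXpos : ∀ x, 0 < pX x) (hpXsum : ∑ x, pX x = 1)
    (hpYXnn : ∀ y x, 0 ≤ pYX y x) (hpYXsum : ∀ x, ∑ y, pYX y x = 1)
    (hid : ∀ x x' y : Fin n → Fin m, hammingDist x x' = 1 →
      pX x * pYX y x / (∑ x'', pX x'' * pYX y x'')
        ≤ Real.exp ε * (pX x' * pYX y x' / (∑ x'', pX x'' * pYX y x''))) :
    D < ∑ x : Fin n → Fin m, ∑ y : Fin n → Fin m,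
          pX x * pYX y x * (hammingDist x y : ℝ) := by
  classical
  have hwnn : ∀ y x : Fin n → Fin m, 0 ≤ pX x * pYX y x :=
    fun y x => mul_nonneg (hpXpos x).le (hpYXnn y x)
  have hm1 : (0:ℝ) < (m:ℝ) - 1 := by
    have : (2:ℝ) ≤ (m:ℝ) := by exact_mod_cast hm
    linarith
  have hexp : (0:ℝ) < Real.exp ε := Real.exp_pos ε
  have hme : (0:ℝ) < (m:ℝ) - 1 + Real.exp ε := by linarith
  -- Step A: joint-weight form of identifiability
  have key : ∀ y x x' : Fin n → Fin m, hammingDist x x' = 1 →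
      pX x * pYX y x ≤ Real.exp ε * (pX x' * pYX y x') := by
    intro y x x' hxx'
    have hS : 0 ≤ ∑ x'', pX x'' * pYX y x'' :=
      Finset.sum_nonneg fun x'' _ => hwnn y x''
    rcases hS.eq_or_lt with hS0 | hSpos
    · have hz := (Finset.sum_eq_zero_iff_of_nonneg (fun x'' _ => hwnn y x'')).mp hS0.symm
      have h1 : pX x * pYX y x = 0 := hz x (mem_univ x)
      have h2 : pX x' * pYX y x' = 0 := hz x' (mem_univ x')
      rw [h1, h2, mul_zero]
    · have h := hid x x' y hxx'
      have h2 := mul_le_mul_of_nonneg_right h hSpos.le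
      rw [div_mul_cancel₀ _ hSpos.ne', mul_assoc, div_mul_cancel₀ _ hSpos.ne'] at h2
      exact h2
  -- updating one coordinate gives a neighbor
  have hupd : ∀ (x : Fin n → Fin m) (i : Fin n) (a : Fin m), x i ≠ a →
      hammingDist x (Function.update x i a) = 1 := by
    intro x i a hne
    have : ({j | x j ≠ Function.update x i a j} : Finset (Fin n)) = {i} := by
      ext j
      simp only [mem_filter, mem_univ, true_and, mem_singleton, Function.update]
      by_cases hj : j = i
      · subst hj; simp [hne]
      · simp [hj]
    simp [hammingDist, this]
  -- bijection: summing over the fiber x i = c of updated points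
  have hbij : ∀ (y : Fin n → Fin m) (i : Fin n) (c a : Fin m),
      ∑ x ∈ univ.filter (fun x => x i = c),
          pX (Function.update x i a) * pYX y (Function.update x i a)
        = ∑ x ∈ univ.filter (fun x => x i = a), pX x * pYX y x := by
    intro y i c a
    refine Finset.sum_nbij' (fun x => Function.update x i a)
      (fun x => Function.update x i c) ?_ ?_ ?_ ?_ ?_
    · intro x hx; simp [Function.update]
    · intro x hx; simp [Function.update]
    · intro x hx
      simp only [mem_filter, mem_univ, true_and] at hx
      simp only [Function.update_idem]
      rw [← hx, Function.update_eq_self]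
    · intro x hx
      simp only [mem_filter, mem_univ, true_and] at hx
      simp only [Function.update_idem]
      rw [← hx, Function.update_eq_self]
    · intro x hx; rfl
  -- per-coordinate bound
  have hcoord : ∀ (y : Fin n → Fin m) (i : Fin n),
      ((m:ℝ) - 1) * (∑ x, pX x * pYX y x)
        ≤ ((m:ℝ) - 1 + Real.exp ε) *
            ∑ x ∈ univ.filter (fun x => ¬ x i = y i), pX x * pYX y x := by
    intro y i
    set S := ∑ x, pX x * pYX y x with hSdef
    set A := ∑ x ∈ univ.filter (fun x => x i = y i), pX x * pYX y x with hAdef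
    set B := ∑ x ∈ univ.filter (fun x => ¬ x i = y i), pX x * pYX y x with hBdef
    have hAB : A + B = S := Finset.sum_filter_add_sum_filter_not univ _ _
    have hA_le : ∀ a : Fin m, a ≠ y i →
        A ≤ Real.exp ε * ∑ x ∈ univ.filter (fun x => x i = a), pX x * pYX y x := by
      intro a ha
      have step : A ≤ ∑ x ∈ univ.filter (fun x => x i = y i),
          Real.exp ε * (pX (Function.update x i a) * pYX y (Function.update x i a)) := by
        apply Finset.sum_le_sum
        intro x hx
        simp only [mem_filter, mem_univ, true_and] at hx
        exact key y x (Function.update x i a) (hupd x i a (by rw [hx]; exact ha.symm))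
      calc A ≤ _ := step
        _ = Real.exp ε * ∑ x ∈ univ.filter (fun x => x i = y i),
              pX (Function.update x i a) * pYX y (Function.update x i a) :=
            (Finset.mul_sum _ _ _).symm
        _ = Real.exp ε * ∑ x ∈ univ.filter (fun x => x i = a), pX x * pYX y x := by
            rw [hbij]
    -- sum over a ≠ y i
    have hfiber : ∑ a ∈ univ.erase (y i),
        ∑ x ∈ univ.filter (fun x => x i = a), pX x * pYX y x = B := by
      rw [Finset.sum_fiberwise_eq_sum_filter univ (univ.erase (y i)) (fun x => x i)
        (fun x => pX x * pYX y x)]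
      apply Finset.sum_congr
      · ext x; simp [Finset.mem_erase]
      · intros; rfl
    have hcard : (univ.erase (y i)).card = m - 1 := by
      rw [Finset.card_erase_of_mem (mem_univ _), Finset.card_univ, Fintype.card_fin]
    have hmain : ((m:ℝ) - 1) * A ≤ Real.exp ε * B := by
      have h1 : ∑ _a ∈ univ.erase (y i), A ≤ ∑ a ∈ univ.erase (y i),
          Real.exp ε * ∑ x ∈ univ.filter (fun x => x i = a), pX x * pYX y x :=
        Finset.sum_le_sum fun a ha => hA_le a (Finset.ne_of_mem_erase ha)
      rw [Finset.sum_const, hcard, ← Finset.mul_sum, hfiber] at h1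
      have hcast : ((m - 1 : ℕ) : ℝ) = (m:ℝ) - 1 := by
        have : (1:ℕ) ≤ m := by omega
        push_cast [this]; ring
      calc ((m:ℝ) - 1) * A = ((m - 1 : ℕ) : ℝ) * A := by rw [hcast]
        _ = (m - 1 : ℕ) • A := by rw [nsmul_eq_mul]
        _ ≤ Real.exp ε * B := h1
    have hBnn : 0 ≤ B := Finset.sum_nonneg fun x _ => hwnn y x
    nlinarith [hmain, hAB]
  -- rewrite distortion for fixed y as sum over coordinates
  have hdist : ∀ y : Fin n → Fin m,
      ∑ x, pX x * pYX y x * (hammingDist x y : ℝ)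
        = ∑ i : Fin n, ∑ x ∈ univ.filter (fun x => ¬ x i = y i), pX x * pYX y x := by
    intro y
    have h1 : ∀ x : Fin n → Fin m, (hammingDist x y : ℝ)
        = ∑ i : Fin n, if x i = y i then (0:ℝ) else 1 := by
      intro x
      rw [hammingDist, Finset.card_filter]
      push_cast
      apply Finset.sum_congr rfl
      intro i _
      by_cases h : x i = y i <;> simp [h]
    calc ∑ x, pX x * pYX y x * (hammingDist x y : ℝ)
        = ∑ x, ∑ i : Fin n, (if x i = y i then (0:ℝ) else pX x * pYX y x) := by
          apply Finset.sum_congr rfl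
          intro x _
          rw [h1, Finset.mul_sum]
          apply Finset.sum_congr rfl
          intro i _
          by_cases h : x i = y i <;> simp [h]
      _ = ∑ i : Fin n, ∑ x, (if x i = y i then (0:ℝ) else pX x * pYX y x) :=
          Finset.sum_comm
      _ = ∑ i : Fin n, ∑ x ∈ univ.filter (fun x => ¬ x i = y i), pX x * pYX y x := by
          apply Finset.sum_congr rfl
          intro i _
          rw [Finset.sum_filter]
          apply Finset.sum_congr rfl
          intro x _
          by_cases h : x i = y i <;> simp [h]
  -- per-y bound
  have hy : ∀ y : Fin n → Fin m,
      ((m:ℝ) - 1) * ((n:ℝ) * ∑ x, pX x * pYX y x)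
        ≤ ((m:ℝ) - 1 + Real.exp ε) * ∑ x, pX x * pYX y x * (hammingDist x y : ℝ) := by
    intro y
    rw [hdist y]
    have h1 : ∑ _i : Fin n, ((m:ℝ) - 1) * (∑ x, pX x * pYX y x)
        ≤ ∑ i : Fin n, ((m:ℝ) - 1 + Real.exp ε) *
            ∑ x ∈ univ.filter (fun x => ¬ x i = y i), pX x * pYX y x :=
      Finset.sum_le_sum fun i _ => hcoord y i
    rw [Finset.sum_const, Finset.card_univ, Fintype.card_fin, nsmul_eq_mul,
      ← Finset.mul_sum] at h1
    calc ((m:ℝ) - 1) * ((n:ℝ) * ∑ x, pX x * pYX y x)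
        = (n:ℝ) * (((m:ℝ) - 1) * ∑ x, pX x * pYX y x) := by ring
      _ ≤ _ := h1
  -- total marginal is 1
  have hmarg : ∑ y : Fin n → Fin m, ∑ x, pX x * pYX y x = 1 := by
    rw [Finset.sum_comm]
    calc ∑ x : Fin n → Fin m, ∑ y, pX x * pYX y x
        = ∑ x : Fin n → Fin m, pX x * ∑ y, pYX y x := by
          apply Finset.sum_congr rfl; intro x _; rw [Finset.mul_sum]
      _ = ∑ x : Fin n → Fin m, pX x := by
          apply Finset.sum_congr rfl; intro x _; rw [hpYXsum x, mul_one]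
      _ = 1 := hpXsum
  set T := ∑ x : Fin n → Fin m, ∑ y : Fin n → Fin m,
      pX x * pYX y x * (hammingDist x y : ℝ) with hTdef
  have hT : ((m:ℝ) - 1) * (n:ℝ) ≤ ((m:ℝ) - 1 + Real.exp ε) * T := by
    have h1 : ∑ y : Fin n → Fin m, ((m:ℝ) - 1) * ((n:ℝ) * ∑ x, pX x * pYX y x)
        ≤ ∑ y : Fin n → Fin m, ((m:ℝ) - 1 + Real.exp ε) *
            ∑ x, pX x * pYX y x * (hammingDist x y : ℝ) :=
      Finset.sum_le_sum fun y _ => hy y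
    rw [← Finset.mul_sum, ← Finset.mul_sum, ← Finset.mul_sum, hmarg, mul_one] at h1
    calc ((m:ℝ) - 1) * (n:ℝ) ≤ _ := h1
      _ = ((m:ℝ) - 1 + Real.exp ε) * T := by rw [hTdef, Finset.sum_comm]
  -- algebra: D * (m - 1 + e^ε) < n * (m - 1)
  have hn1 : (1:ℝ) ≤ (n:ℝ) := by exact_mod_cast hn
  have hmpos : (0:ℝ) < (m:ℝ) := by positivity
  have hDltn : D < (n:ℝ) := by
    have h2 : (n:ℝ) * ((m:ℝ) - 1) / (m:ℝ) < (n:ℝ) := by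
      rw [div_lt_iff₀ hmpos]
      nlinarith
    linarith
  have hnD1 : (0:ℝ) < (n:ℝ) / D - 1 := by
    rw [sub_pos, lt_div_iff₀ hD0, one_mul]
    exact hDltn
  have hexplt : Real.exp ε < ((n:ℝ) / D - 1) * ((m:ℝ) - 1) := by
    have := Real.exp_lt_exp.mpr hεlt
    rwa [Real.exp_add, Real.exp_log hnD1, Real.exp_log hm1] at this
  have halg : D * ((m:ℝ) - 1 + Real.exp ε) < (n:ℝ) * ((m:ℝ) - 1) := by
    have h3 : D * (((n:ℝ) / D - 1) * ((m:ℝ) - 1)) = ((n:ℝ) - D) * ((m:ℝ) - 1) := by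
      field_simp
    nlinarith [mul_lt_mul_of_pos_left hexplt hD0]
  -- conclude
  have hfinal : D * ((m:ℝ) - 1 + Real.exp ε) < ((m:ℝ) - 1 + Real.exp ε) * T := by
    calc D * ((m:ℝ) - 1 + Real.exp ε) < (n:ℝ) * ((m:ℝ) - 1) := halg
      _ = ((m:ℝ) - 1) * (n:ℝ) := by ring
      _ ≤ ((m:ℝ) - 1 + Real.exp ε) * T := hT
  rw [mul_comm D _] at hfinal
  exact lt_of_mul_lt_mul_left hfinal hme.le
end

section
/- Any mechanism p_{Y|X} on D^n satisfying ε-differential privacy has expected Hamming distortion E[d(X,Y)] ≥ h(ε + ε_X) = n/(1 + e^{ε+ε_X}/(m−1)), where ε_X = max over neighboring x,x' of ln(p_X(x)/p_X(x')). Consequently ε_d*(D) ≥ h^{-1}(D) − ε_X. -/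
/-- Any `ε`-differentially private mechanism has expected Hamming distortion at least
`h(ε+ε_X) = n/(1+e^{ε+ε_X}/(m-1))`, where `ε_X` bounds the prior ratio over neighbors.
Consequently, the differential-privacy level needed for distortion at most `D` is at least
`h⁻¹(D) - ε_X`. -/
theorem dp_privacy_distortion_lower_bound (n m : ℕ) (hn : 1 ≤ n) (hm : 2 ≤ m)
    (ε εX : ℝ) (hε : 0 ≤ ε) (hεX : 0 ≤ εX)
    (pX : (Fin n → Fin m) → ℝ) (pYX : (Fin n → Fin m) → (Fin n → Fin m) → ℝ)
    (hpXpos : ∀ x, 0 < pX x) (hpXsum : ∑ x, pX x = 1)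
    (hpYXnn : ∀ y x, 0 ≤ pYX y x) (hpYXsum : ∀ x, ∑ y, pYX y x = 1)
    (hprior : ∀ x x' : Fin n → Fin m, hammingDist x x' = 1 → pX x ≤ Real.exp εX * pX x')
    (hdp : ∀ x x' y : Fin n → Fin m, hammingDist x x' = 1 →
      pYX y x ≤ Real.exp ε * pYX y x') :
    (∑ x : Fin n → Fin m, ∑ y : Fin n → Fin m,
        pX x * pYX y x * (hammingDist x y : ℝ))
      ≥ (n : ℝ) / (1 + Real.exp (ε + εX) / ((m : ℝ) - 1)) ∧
    (∀ D : ℝ, 0 < D → D ≤ (n : ℝ) * ((m : ℝ) - 1) / (m : ℝ) →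
      (∑ x : Fin n → Fin m, ∑ y : Fin n → Fin m,
          pX x * pYX y x * (hammingDist x y : ℝ)) ≤ D →
      Real.log ((n : ℝ) / D - 1) + Real.log ((m : ℝ) - 1) - εX ≤ ε) := by
  classical
  have hm1 : (0:ℝ) < (m:ℝ) - 1 := by
    have : (2:ℝ) ≤ (m:ℝ) := by exact_mod_cast hm
    linarith
  set c : ℝ := Real.exp (ε + εX) with hc
  have hcpos : 0 < c := Real.exp_pos _
  set K : ℝ := 1 + c / ((m:ℝ) - 1) with hKdef
  have hKpos : 0 < K := by
    have : 0 < c / ((m:ℝ) - 1) := div_pos hcpos hm1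
    rw [hKdef]; linarith
  set q : (Fin n → Fin m) → (Fin n → Fin m) → ℝ := fun x y => pX x * pYX y x with hq
  have hqnn : ∀ x y, 0 ≤ q x y := fun x y => mul_nonneg (hpXpos x).le (hpYXnn y x)
  -- neighbor inequality for the joint
  have hqn : ∀ x x' y, hammingDist x x' = 1 → q x y ≤ c * q x' y := by
    intro x x' y h
    have h1 := hprior x x' h
    have h2 := hdp x x' y h
    calc q x y = pX x * pYX y x := rfl
      _ ≤ (Real.exp εX * pX x') * (Real.exp ε * pYX y x') := by
          exact mul_le_mul h1 h2 (hpYXnn y x)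
            (mul_nonneg (Real.exp_pos εX).le (hpXpos x').le)
      _ = c * q x' y := by rw [hc, Real.exp_add]; ring
  -- update flip distance 1
  have hflip : ∀ (x : Fin n → Fin m) (k : Fin n) (v : Fin m), v ≠ x k →
      hammingDist x (Function.update x k v) = 1 := by
    intro x k v h
    rw [hammingDist, Finset.card_eq_one]
    refine ⟨k, ?_⟩
    ext j
    by_cases hj : j = k <;> simp [Function.update, hj]
    · exact fun h' => h h'.symm
  -- marginal
  set Py : (Fin n → Fin m) → ℝ := fun y => ∑ x, q x y with hPy
  have hPysum : ∑ y, Py y = 1 := by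
    rw [hPy]
    simp only
    rw [Finset.sum_comm]
    calc ∑ x : Fin n → Fin m, ∑ y, q x y
        = ∑ x : Fin n → Fin m, pX x * ∑ y, pYX y x := by
          refine Finset.sum_congr rfl fun x _ => ?_
          rw [Finset.mul_sum]
      _ = 1 := by
          simp only [hpYXsum, mul_one]; exact hpXsum
  -- key per (y,k) bound
  have hB : ∀ (y : Fin n → Fin m) (k : Fin n),
      Py y / K ≤ ∑ x ∈ Finset.univ.filter (fun x => x k ≠ y k), q x y := by
    intro y k
    set Bs := ∑ x ∈ Finset.univ.filter (fun x => x k ≠ y k), q x y with hBs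
    set As := ∑ x ∈ Finset.univ.filter (fun x => x k = y k), q x y with hAs
    have hsplit : As + Bs = Py y := by
      rw [hAs, hBs, hPy]
      exact Finset.sum_filter_add_sum_filter_not _ _ _
    have hBnn : 0 ≤ Bs := Finset.sum_nonneg fun x _ => hqnn x y
    -- bijection: Bs = sum over (x with x k = y k) × (v ≠ y k)
    have hbij : Bs = ∑ p ∈ (Finset.univ.filter (fun x => x k = y k)) ×ˢ
        (Finset.univ.erase (y k)), q (Function.update p.1 k p.2) y := by
      rw [hBs]
      refine Finset.sum_nbij' (fun x' => (Function.update x' k (y k), x' k))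
        (fun p => Function.update p.1 k p.2) ?_ ?_ ?_ ?_ ?_
      · intro x' hx'
        simp only [Finset.mem_filter, Finset.mem_univ, true_and] at hx'
        simp [Finset.mem_product, Finset.mem_erase, hx']
      · intro p hp
        simp only [Finset.mem_product, Finset.mem_filter, Finset.mem_univ, true_and,
          Finset.mem_erase] at hp
        simp [hp.2.1]
      · intro x' hx'
        simp only [Function.update_idem, Function.update_self]
        rw [Function.update_eq_self]
      · intro p hp
        simp only [Finset.mem_product, Finset.mem_filter, Finset.mem_univ, true_and,
          Finset.mem_erase] at hp
        ext1 <;> simp [Function.update_idem, hp.1]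
      · intro x' hx'
        simp only [Function.update_idem]
        rw [Function.update_eq_self]
    -- (m-1) * As ≤ c * Bs
    have hAB : ((m:ℝ) - 1) * As ≤ c * Bs := by
      have hcard : (Finset.univ.erase (y k)).card = m - 1 := by
        rw [Finset.card_erase_of_mem (Finset.mem_univ _), Finset.card_univ, Fintype.card_fin]
      calc ((m:ℝ) - 1) * As
          = ∑ x ∈ Finset.univ.filter (fun x => x k = y k),
              ∑ _v ∈ Finset.univ.erase (y k), q x y := by
            rw [hAs, Finset.mul_sum]
            refine Finset.sum_congr rfl fun x _ => ?_
            rw [Finset.sum_const, hcard, nsmul_eq_mul]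
            congr 1
            have : (1:ℝ) ≤ (m:ℝ) := by exact_mod_cast Nat.one_le_of_lt hm
            push_cast [Nat.cast_sub (Nat.one_le_of_lt hm)]
            ring
        _ ≤ ∑ x ∈ Finset.univ.filter (fun x => x k = y k),
              ∑ v ∈ Finset.univ.erase (y k), c * q (Function.update x k v) y := by
            refine Finset.sum_le_sum fun x hx => Finset.sum_le_sum fun v hv => ?_
            simp only [Finset.mem_filter, Finset.mem_univ, true_and] at hx
            simp only [Finset.mem_erase, Finset.mem_univ, and_true] at hv
            exact hqn x (Function.update x k v) y (hflip x k v (by rw [hx]; exact hv))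
        _ = c * Bs := by
            rw [hbij, Finset.sum_product, Finset.mul_sum]
            refine Finset.sum_congr rfl fun x _ => ?_
            rw [Finset.mul_sum]
    -- conclude
    rw [div_le_iff₀ hKpos]
    have h1 : As ≤ c * Bs / ((m:ℝ) - 1) := by
      rw [le_div_iff₀ hm1]; linarith [hAB]
    have : Py y ≤ Bs * K := by
      rw [hKdef]
      have : Bs * (1 + c / ((m:ℝ) - 1)) = Bs + Bs * c / ((m:ℝ)-1) := by ring
      rw [this]
      have : c * Bs / ((m:ℝ)-1) = Bs * c / ((m:ℝ)-1) := by ring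
      linarith [hsplit, h1, this ▸ h1]
    linarith
  -- part 1
  have hcast : ∀ x y : Fin n → Fin m,
      (hammingDist x y : ℝ) = ∑ k, if x k ≠ y k then (1:ℝ) else 0 := by
    intro x y
    rw [hammingDist, Finset.card_filter]
    push_cast
    rfl
  have hE : (∑ x : Fin n → Fin m, ∑ y : Fin n → Fin m, q x y * (hammingDist x y : ℝ))
      = ∑ y : Fin n → Fin m, ∑ k : Fin n,
          ∑ x ∈ Finset.univ.filter (fun x => x k ≠ y k), q x y := by
    rw [Finset.sum_comm]
    refine Finset.sum_congr rfl fun y _ => ?_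
    calc ∑ x : Fin n → Fin m, q x y * (hammingDist x y : ℝ)
        = ∑ x : Fin n → Fin m, ∑ k, (if x k ≠ y k then q x y else 0) := by
          refine Finset.sum_congr rfl fun x _ => ?_
          rw [hcast, Finset.mul_sum]
          refine Finset.sum_congr rfl fun k _ => ?_
          rw [mul_ite, mul_one, mul_zero]
      _ = ∑ k, ∑ x : Fin n → Fin m, (if x k ≠ y k then q x y else 0) := Finset.sum_comm
      _ = ∑ k : Fin n, ∑ x ∈ Finset.univ.filter (fun x => x k ≠ y k), q x y := by
          refine Finset.sum_congr rfl fun k _ => ?_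
          rw [Finset.sum_filter]
  have part1 : (∑ x : Fin n → Fin m, ∑ y : Fin n → Fin m,
      pX x * pYX y x * (hammingDist x y : ℝ)) ≥ (n:ℝ) / K := by
    have : (∑ x : Fin n → Fin m, ∑ y : Fin n → Fin m,
        pX x * pYX y x * (hammingDist x y : ℝ))
        = ∑ y : Fin n → Fin m, ∑ k : Fin n,
          ∑ x ∈ Finset.univ.filter (fun x => x k ≠ y k), q x y := hE
    rw [this]
    have hstep : ∀ y : Fin n → Fin m, (n:ℝ) * (Py y / K) ≤
        ∑ k : Fin n, ∑ x ∈ Finset.univ.filter (fun x => x k ≠ y k), q x y := by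
      intro y
      calc (n:ℝ) * (Py y / K) = ∑ _k : Fin n, Py y / K := by
            rw [Finset.sum_const, Finset.card_univ, Fintype.card_fin, nsmul_eq_mul]
        _ ≤ _ := Finset.sum_le_sum fun k _ => hB y k
    calc (n:ℝ) / K = ∑ y : Fin n → Fin m, (n:ℝ) * (Py y / K) := by
          have : ∑ y : Fin n → Fin m, (n:ℝ) * (Py y / K)
              = ((n:ℝ) / K) * ∑ y, Py y := by
            rw [Finset.mul_sum]
            refine Finset.sum_congr rfl fun y _ => ?_
            ring
          rw [this, hPysum, mul_one]
      _ ≤ _ := Finset.sum_le_sum fun y _ => hstep y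
  refine ⟨part1, ?_⟩
  -- part 2
  intro D hD hDle hED
  have hnK : (n:ℝ) / K ≤ D := le_trans part1 hED
  have hn1 : (1:ℝ) ≤ (n:ℝ) := by exact_mod_cast hn
  have hmpos : (0:ℝ) < (m:ℝ) := by linarith
  -- n/D - 1 ≥ 1/(m-1) > 0
  have hnD : (m:ℝ) / ((m:ℝ) - 1) ≤ (n:ℝ) / D := by
    rw [div_le_div_iff₀ hm1 hD]
    -- m * D ≤ n * (m-1)  from D ≤ n(m-1)/m
    have h' : D * (m:ℝ) ≤ (n:ℝ) * ((m:ℝ) - 1) := by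
      have := hDle
      rw [le_div_iff₀ hmpos] at this
      linarith
    linarith
  have hpos1 : 0 < (n:ℝ) / D - 1 := by
    have : (1:ℝ) < (m:ℝ) / ((m:ℝ) - 1) := by
      rw [lt_div_iff₀ hm1]; linarith
    linarith
  -- n ≤ D * K, so n/D - 1 ≤ c/(m-1), so (n/D-1)(m-1) ≤ c
  have hnDK : (n:ℝ) / D ≤ K := by
    rw [div_le_iff₀ hD]
    have := (div_le_iff₀ hKpos).mp hnK
    linarith
  have hmain : ((n:ℝ) / D - 1) * ((m:ℝ) - 1) ≤ c := by
    have h1 : (n:ℝ) / D - 1 ≤ c / ((m:ℝ) - 1) := by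
      rw [hKdef] at hnDK; linarith
    calc ((n:ℝ) / D - 1) * ((m:ℝ) - 1) ≤ (c / ((m:ℝ)-1)) * ((m:ℝ)-1) := by
          exact mul_le_mul_of_nonneg_right h1 hm1.le
      _ = c := by field_simp
  have hlog : Real.log (((n:ℝ) / D - 1) * ((m:ℝ) - 1)) ≤ ε + εX := by
    have := Real.log_le_log (by positivity) hmain
    rwa [hc, Real.log_exp] at this
  rw [Real.log_mul (ne_of_gt hpos1) (ne_of_gt hm1)] at hlog
  linarith
end

section
/- If the prior p_X is the uniform distribution on D^n, then a mechanism satisfies ε-differential privacy if and only if its posterior satisfies ε-identifiability; hence under the uniform prior ε_i*(D) = ε_d*(D) for all D. -/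
lemma dp_iff_ident_aux (n m : ℕ) (hm : 2 ≤ m) (e : ℝ)
    (pYX : (Fin n → Fin m) → (Fin n → Fin m) → ℝ)
    (h0 : ∀ y x, 0 ≤ pYX y x) :
    (∀ x x' y : Fin n → Fin m, hammingDist x x' = 1 →
        pYX y x ≤ Real.exp e * pYX y x') ↔
    (∀ x x' y : Fin n → Fin m, hammingDist x x' = 1 →
        (1 / (m : ℝ) ^ n) * pYX y x / (∑ x'', (1 / (m : ℝ) ^ n) * pYX y x'')
          ≤ Real.exp e *
            ((1 / (m : ℝ) ^ n) * pYX y x' / (∑ x'', (1 / (m : ℝ) ^ n) * pYX y x''))) := by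
  have hmpos : (0 : ℝ) < (m : ℝ) := by exact_mod_cast Nat.lt_of_lt_of_le (by norm_num) hm
  have hc : (0 : ℝ) < 1 / (m : ℝ) ^ n := by positivity
  constructor
  · intro h x x' y hd
    have hS : 0 ≤ ∑ x'' : Fin n → Fin m, (1 / (m : ℝ) ^ n) * pYX y x'' :=
      Finset.sum_nonneg fun i _ => mul_nonneg hc.le (h0 y i)
    rcases hS.eq_or_lt with hS0 | hSpos
    · rw [← hS0]
      simp
    · rw [mul_div_assoc', div_le_div_iff_of_pos_right hSpos]
      have := h x x' y hd
      nlinarith [hc.le]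
  · intro h x x' y hd
    have := h x x' y hd
    have hT : 0 ≤ ∑ x'' : Fin n → Fin m, pYX y x'' :=
      Finset.sum_nonneg fun i _ => h0 y i
    rcases hT.eq_or_lt with hT0 | hTpos
    · have hx0 : pYX y x = 0 := by
        have := (Finset.sum_eq_zero_iff_of_nonneg
          (fun i _ => h0 y i)).mp hT0.symm x (Finset.mem_univ x)
        exact this
      rw [hx0]
      exact mul_nonneg (Real.exp_pos e).le (h0 y x')
    · have hSval : (∑ x'' : Fin n → Fin m, (1 / (m : ℝ) ^ n) * pYX y x'')
          = (1 / (m : ℝ) ^ n) * ∑ x'' : Fin n → Fin m, pYX y x'' := by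
        rw [Finset.mul_sum]
      have hSpos : 0 < ∑ x'' : Fin n → Fin m, (1 / (m : ℝ) ^ n) * pYX y x'' := by
        rw [hSval]; positivity
      rw [mul_div_assoc', div_le_div_iff_of_pos_right hSpos] at this
      nlinarith [hc]

/-- Under the uniform prior on `D^n`, a mechanism satisfies `ε`-differential privacy iff its
Bayes posterior satisfies `ε`-identifiability; hence the privacy–distortion functions under
identifiability and under differential privacy coincide. -/
theorem uniform_prior_dp_iff_identifiability (n m : ℕ) (hm : 2 ≤ m) (ε : ℝ) (hε : 0 ≤ ε) :
    (∀ pYX : (Fin n → Fin m) → (Fin n → Fin m) → ℝ,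
      (∀ y x, 0 ≤ pYX y x) → (∀ x, ∑ y, pYX y x = 1) →
      ((∀ x x' y : Fin n → Fin m, hammingDist x x' = 1 →
          pYX y x ≤ Real.exp ε * pYX y x') ↔
       (∀ x x' y : Fin n → Fin m, hammingDist x x' = 1 →
          (1 / (m : ℝ) ^ n) * pYX y x / (∑ x'', (1 / (m : ℝ) ^ n) * pYX y x'')
            ≤ Real.exp ε *
              ((1 / (m : ℝ) ^ n) * pYX y x' / (∑ x'', (1 / (m : ℝ) ^ n) * pYX y x''))))) ∧
    (∀ Db : ℝ,
      sInf {e : ℝ | 0 ≤ e ∧ ∃ pYX : (Fin n → Fin m) → (Fin n → Fin m) → ℝ,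
          (∀ y x, 0 ≤ pYX y x) ∧ (∀ x, ∑ y, pYX y x = 1) ∧
          (∀ x x' y : Fin n → Fin m, hammingDist x x' = 1 →
            (1 / (m : ℝ) ^ n) * pYX y x / (∑ x'', (1 / (m : ℝ) ^ n) * pYX y x'')
              ≤ Real.exp e *
                ((1 / (m : ℝ) ^ n) * pYX y x' / (∑ x'', (1 / (m : ℝ) ^ n) * pYX y x''))) ∧
          (∑ x : Fin n → Fin m, ∑ y : Fin n → Fin m,
              (1 / (m : ℝ) ^ n) * pYX y x * (hammingDist x y : ℝ)) ≤ Db}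
        = sInf {e : ℝ | 0 ≤ e ∧ ∃ pYX : (Fin n → Fin m) → (Fin n → Fin m) → ℝ,
          (∀ y x, 0 ≤ pYX y x) ∧ (∀ x, ∑ y, pYX y x = 1) ∧
          (∀ x x' y : Fin n → Fin m, hammingDist x x' = 1 →
            pYX y x ≤ Real.exp e * pYX y x') ∧
          (∑ x : Fin n → Fin m, ∑ y : Fin n → Fin m,
              (1 / (m : ℝ) ^ n) * pYX y x * (hammingDist x y : ℝ)) ≤ Db}) := by
  constructor
  · intro pYX h0 _
    exact dp_iff_ident_aux n m hm ε pYX h0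
  · intro Db
    congr 1
    ext e
    simp only [Set.mem_setOf_eq]
    constructor
    · rintro ⟨he, pYX, h0, h1, h2, h3⟩
      exact ⟨he, pYX, h0, h1, (dp_iff_ident_aux n m hm e pYX h0).mpr h2, h3⟩
    · rintro ⟨he, pYX, h0, h1, h2, h3⟩
      exact ⟨he, pYX, h0, h1, (dp_iff_ident_aux n m hm e pYX h0).mp h2, h3⟩
end

section
/- For the mechanism 𝓔_i with conditional probabilities p_{Y|X}(y|x) = p_Y(y)·e^{-ε·d(x,y)} / (p_X(x)·(1+(m-1)e^{-ε})^n), where p_Y is chosen so that Σ_y p_{X|Y}(x|y) p_Y(y) = p_X(x) (assumed to exist), the posterior equals p_{X|Y}(x|y) = e^{-ε·d(x,y)}/(1+(m-1)e^{-ε})^n, so 𝓔_i satisfies ε-identifiability and has distortion E[d(X,Y)] = h(ε). -/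
/-! The joint weight `p_X(x) p_{Y|X}(y|x)` is `p_Y(y) K(x, y)` with
`K(x, y) = e^{-ε d(x,y)} / (1 + (m - 1) e^{-ε}) ^ n`. Since `t ^ d(x, y)` factorises over
coordinates, `∑ₓ t ^ d(x, y) = (1 + (m - 1) t) ^ n`, so every column of `K` sums to one: the
marginal of `Y` is `p_Y` and the posterior is `K`, and identifiability is the triangle inequality
for `d`. Differentiating the same generating function gives
`∑ₓ d(x, y) t ^ d(x, y) = n (m - 1) t (1 + (m - 1) t) ^ (n - 1)`, so the expected distortion
given `Y = y` is `n (m - 1) e^{-ε} / (1 + (m - 1) e^{-ε}) = h(ε)` whatever `y` is. -/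

open Finset Polynomial Real

theorem Polynomial.X_mul_derivative_X_pow {R : Type*} [CommSemiring R] (d : ℕ) :
    (X : R[X]) * derivative (X ^ d) = C (d : R) * X ^ d := by
  rcases d with _ | d
  · simp
  · rw [derivative_X_pow, Nat.add_sub_cancel, pow_succ]; ring

theorem one_add_sub_one_mul_exp_neg_pos {q : ℝ} (hq : 1 ≤ q) (ε : ℝ) :
    0 < 1 + (q - 1) * exp (-ε) := by
  have : 0 ≤ q - 1 := by linarith
  positivity

section Hamming

variable {ι β : Type*} [Fintype ι] [DecidableEq β]

theorem pow_hammingDist_eq_prod {M : Type*} [CommMonoid M] (t : M) (x y : ι → β) :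
    t ^ hammingDist x y = ∏ i, if x i = y i then 1 else t := by
  rw [prod_ite, prod_const_one, one_mul, prod_const, hammingDist]

theorem exp_neg_mul_hammingDist (ε : ℝ) (x y : ι → β) :
    exp (-ε * hammingDist x y) = exp (-ε) ^ hammingDist x y := by
  rw [mul_comm, exp_nat_mul]

variable [Fintype β]

theorem sum_ite_eq_one_add {R : Type*} [CommRing R] (t : R) (b : β) :
    ∑ a, (if a = b then 1 else t) = 1 + ((Fintype.card β : R) - 1) * t := by
  have h (a : β) : (if a = b then 1 else t) = t + if a = b then 1 - t else 0 := by
    split_ifs <;> ring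
  simp only [h, sum_add_distrib, sum_const, card_univ, nsmul_eq_mul, sum_ite_eq', mem_univ, if_true]
  ring

noncomputable def hammingKernel (ε : ℝ) (x y : ι → β) : ℝ :=
  exp (-ε * hammingDist x y) / (1 + ((Fintype.card β : ℝ) - 1) * exp (-ε)) ^ Fintype.card ι

theorem hammingKernel_le_exp_mul [Nonempty β] {ε : ℝ} (hε : 0 ≤ ε) (x x' y : ι → β) :
    hammingKernel ε x y ≤ exp (ε * hammingDist x x') * hammingKernel ε x' y := by
  have hZ := one_add_sub_one_mul_exp_neg_pos (q := Fintype.card β)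
    (by exact_mod_cast Fintype.card_pos) ε
  rw [hammingKernel, hammingKernel, ← mul_div_assoc]
  refine div_le_div_of_nonneg_right ?_ (by positivity)
  rw [← exp_add, exp_le_exp]
  have : (hammingDist x' y : ℝ) ≤ hammingDist x x' + hammingDist x y := by
    rw [hammingDist_comm x x']
    exact_mod_cast hammingDist_triangle x' x y
  nlinarith

variable [DecidableEq ι]

theorem sum_pow_hammingDist {R : Type*} [CommRing R] (t : R) (y : ι → β) :
    ∑ x, t ^ hammingDist x y = (1 + ((Fintype.card β : R) - 1) * t) ^ Fintype.card ι := by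
  simp_rw [pow_hammingDist_eq_prod]
  rw [← Fintype.prod_sum fun i a => if a = y i then (1 : R) else t]
  simp_rw [sum_ite_eq_one_add, prod_const, card_univ]

theorem sum_hammingDist_mul_pow_hammingDist {R : Type*} [CommRing R] (t : R) (y : ι → β) :
    ∑ x, (hammingDist x y : R) * t ^ hammingDist x y =
      Fintype.card ι * (((Fintype.card β : R) - 1) * t) *
        (1 + ((Fintype.card β : R) - 1) * t) ^ (Fintype.card ι - 1) := by
  have h := congrArg (fun p => eval t (X * derivative p)) (sum_pow_hammingDist (X : R[X]) y)
  simp only [derivative_sum, mul_sum, X_mul_derivative_X_pow] at h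
  simp only [eval_finsetSum, eval_mul, eval_natCast, eval_pow, eval_X, derivative_pow,
    derivative_add, derivative_one, derivative_mul, derivative_sub, derivative_natCast,
    derivative_X, eval_add, eval_sub, eval_one, eval_C, eval_zero] at h
  linear_combination h

theorem sum_hammingKernel [Nonempty β] (ε : ℝ) (y : ι → β) : ∑ x, hammingKernel ε x y = 1 := by
  simp_rw [hammingKernel, ← sum_div, exp_neg_mul_hammingDist, sum_pow_hammingDist]
  exact div_self (pow_pos (one_add_sub_one_mul_exp_neg_pos
    (by exact_mod_cast Fintype.card_pos) ε) _).ne'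

theorem sum_hammingKernel_mul_hammingDist (hβ : 1 < Fintype.card β) (ε : ℝ) (y : ι → β) :
    ∑ x, hammingKernel ε x y * hammingDist x y =
      Fintype.card ι / (1 + exp ε / ((Fintype.card β : ℝ) - 1)) := by
  have hq : (1 : ℝ) < Fintype.card β := by exact_mod_cast hβ
  have hZ := one_add_sub_one_mul_exp_neg_pos hq.le ε
  simp_rw [hammingKernel, div_mul_eq_mul_div, ← sum_div, exp_neg_mul_hammingDist,
    mul_comm _ (hammingDist _ _ : ℝ), sum_hammingDist_mul_pow_hammingDist]
  generalize Fintype.card ι = n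
  rcases n with _ | n
  · simp
  · have := sub_pos.mpr hq
    rw [Nat.add_sub_cancel, pow_succ, exp_neg]
    field_simp
    ring

end Hamming

theorem identifiability_optimal_mechanism_general (n m : ℕ) (hm : 2 ≤ m) (ε : ℝ) (hε : 0 ≤ ε)
    (pX pY : (Fin n → Fin m) → ℝ)
    (hpXpos : ∀ x, 0 < pX x)
    (hpYsum : ∑ y, pY y = 1)
    (pYX : (Fin n → Fin m) → (Fin n → Fin m) → ℝ)
    (hmech : ∀ x y, pYX y x = pY y * Real.exp (-ε * (hammingDist x y : ℝ))
        / (pX x * (1 + ((m : ℝ) - 1) * Real.exp (-ε)) ^ n)) :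
    (∀ x y : Fin n → Fin m, 0 < pY y →
      pX x * pYX y x / (∑ x'', pX x'' * pYX y x'')
        = Real.exp (-ε * (hammingDist x y : ℝ)) / (1 + ((m : ℝ) - 1) * Real.exp (-ε)) ^ n) ∧
    (∀ x x' y : Fin n → Fin m, hammingDist x x' = 1 →
      pX x * pYX y x / (∑ x'', pX x'' * pYX y x'')
        ≤ Real.exp ε * (pX x' * pYX y x' / (∑ x'', pX x'' * pYX y x''))) ∧
    (∑ x : Fin n → Fin m, ∑ y : Fin n → Fin m,
        pX x * pYX y x * (hammingDist x y : ℝ))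
      = (n : ℝ) / (1 + Real.exp ε / ((m : ℝ) - 1)) := by
  have : NeZero m := ⟨by omega⟩
  have hK (x y : Fin n → Fin m) : exp (-ε * hammingDist x y) /
      (1 + ((m : ℝ) - 1) * exp (-ε)) ^ n = hammingKernel ε x y := by
    simp [hammingKernel]
  have hjoint (x y : Fin n → Fin m) : pX x * pYX y x = pY y * hammingKernel ε x y := by
    rw [hmech, ← hK]
    field_simp [(hpXpos x).ne']
  have hmarg (y : Fin n → Fin m) : ∑ x, pX x * pYX y x = pY y := by
    simp_rw [hjoint, ← mul_sum, sum_hammingKernel, mul_one]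
  have hpost (x y : Fin n → Fin m) (hy : pY y ≠ 0) :
      pX x * pYX y x / ∑ x'', pX x'' * pYX y x'' = hammingKernel ε x y := by
    rw [hjoint, hmarg, mul_div_cancel_left₀ _ hy]
  refine ⟨fun x y hy => (hpost x y hy.ne').trans (hK x y).symm, fun x x' y hxx' => ?_, ?_⟩
  · by_cases hy : pY y = 0
    · simp [hmarg, hy]
    · simpa [hpost x y hy, hpost x' y hy, hxx'] using hammingKernel_le_exp_mul hε x x' y
  · have hdist (y : Fin n → Fin m) : ∑ x, hammingKernel ε x y * hammingDist x y =
        n / (1 + exp ε / ((m : ℝ) - 1)) := by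
      simpa using sum_hammingKernel_mul_hammingDist (by rw [Fintype.card_fin]; omega) ε y
    simp_rw [hjoint, mul_assoc]
    rw [sum_comm]
    simp_rw [← mul_sum, hdist, ← sum_mul, hpYsum, one_mul]

/-- The mechanism `𝓔_i` with `p_{Y|X}(y|x) = p_Y(y) e^{-ε d(x,y)}/(p_X(x)(1+(m-1)e^{-ε})^n)`,
where `p_Y` is a pmf satisfying the consistency condition, has Bayes posterior
`p_{X|Y}(x|y) = e^{-ε d(x,y)}/(1+(m-1)e^{-ε})^n`; hence it satisfies `ε`-identifiability and
its distortion equals `h(ε) = n/(1+e^ε/(m-1))`. -/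
theorem identifiability_optimal_mechanism (n m : ℕ) (hm : 2 ≤ m) (ε : ℝ) (hε : 0 ≤ ε)
    (pX pY : (Fin n → Fin m) → ℝ)
    (hpXpos : ∀ x, 0 < pX x) (hpXsum : ∑ x, pX x = 1)
    (hpYnn : ∀ y, 0 ≤ pY y) (hpYsum : ∑ y, pY y = 1)
    (hcons : ∀ x, ∑ y, Real.exp (-ε * (hammingDist x y : ℝ))
        / (1 + ((m : ℝ) - 1) * Real.exp (-ε)) ^ n * pY y = pX x)
    (pYX : (Fin n → Fin m) → (Fin n → Fin m) → ℝ)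
    (hmech : ∀ x y, pYX y x = pY y * Real.exp (-ε * (hammingDist x y : ℝ))
        / (pX x * (1 + ((m : ℝ) - 1) * Real.exp (-ε)) ^ n)) :
    (∀ x y : Fin n → Fin m, 0 < pY y →
      pX x * pYX y x / (∑ x'', pX x'' * pYX y x'')
        = Real.exp (-ε * (hammingDist x y : ℝ)) / (1 + ((m : ℝ) - 1) * Real.exp (-ε)) ^ n) ∧
    (∀ x x' y : Fin n → Fin m, hammingDist x x' = 1 →
      pX x * pYX y x / (∑ x'', pX x'' * pYX y x'')
        ≤ Real.exp ε * (pX x' * pYX y x' / (∑ x'', pX x'' * pYX y x''))) ∧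
    (∑ x : Fin n → Fin m, ∑ y : Fin n → Fin m,
        pX x * pYX y x * (hammingDist x y : ℝ))
      = (n : ℝ) / (1 + Real.exp ε / ((m : ℝ) - 1)) :=
  identifiability_optimal_mechanism_general n m hm ε hε pX pY hpXpos hpYsum pYX hmech
end
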